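/- arXiv:1002.2845 — 6 statements merged into one kernel-verified Lean document; each statement's English description precedes it below -/
import Mathlib

section
/- For all natural numbers k ≥ 1 and real numbers ν₁, ν₂ with 0 ≤ ν₁ + ν₂ and ν₁ + k·ν₂ ≤ 1 and ν₂ ≥ 0 (so that ν₁+ν₂ ≤ ν₁+k·ν₂), if U₍₁₎ ≤ ... ≤ U₍ₖ₎ are the order statistics of k i.i.d. uniform random variables on (0,1), then P(U₍₁₎ ≤ ν₁+ν₂, U₍₂₎ ≤ ν₁+2ν₂, ..., U₍ₖ₎ ≤ ν₁+kν₂) = (ν₁+ν₂)(ν₁+(k+1)ν₂)^{k-1}. -/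
/-!
Work with Lebesgue measure on `(c, 1]^k` and thresholds `t j = ν₁ + j ν₂`, `c ≤ t 1`; the claim
becomes that the event has volume `a (a + k ν₂)^(k-1)` with `a = t 1 - c`. Split the event
according to the set `S` of coordinates that are `≤ t 1`. These coordinates range freely over
`(c, t 1]`, contributing `a^|S|`, while the others lie in `(t 1, 1]` and must satisfy the same
kind of constraint with thresholds shifted by `|S|`: an instance with `k - |S|` coordinates and
`a' = |S| ν₂`, so by induction it contributes `|S| ν₂ (k ν₂)^(k-|S|-1)` (or `1` if `S` is
everything). Summing over `S` leaves the Abel-type identity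
`∑ₘ C(k,m) aᵐ m ν₂ (k ν₂)^(k-m-1) = a (a + k ν₂)^(k-1)`, where `C(k,m) m = k C(k-1,m-1)` reduces
it to the binomial theorem.
-/

open MeasureTheory Finset
open scoped Classical

noncomputable def unifM : Measure ℝ := volume.restrict (Set.Ioo (0:ℝ) 1)

noncomputable def iidUnif (k : ℕ) : Measure (Fin k → ℝ) := Measure.pi fun _ => unifM

/-- `Psi k t` is the probability that the order statistics `U_(1) ≤ ... ≤ U_(k)` of
`k` i.i.d. uniform variables on `(0,1)` satisfy `U_(j) ≤ t j` for all `1 ≤ j ≤ k`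
(1-indexed thresholds), expressed via the counting characterization
`U_(j) ≤ s ↔ #{i : U i ≤ s} ≥ j`. By convention `Psi 0 t = 1`. -/
noncomputable def Psi (k : ℕ) (t : ℕ → ℝ) : ℝ :=
  (iidUnif k {x | ∀ j ∈ Finset.Icc 1 k,
    j ≤ (Finset.univ.filter (fun i : Fin k => x i ≤ t j)).card}).toReal

/-- Unnormalised: the uniform law on `(c, 1]^ι` times `(1 - c)^|ι|`. The right-closed interval
makes `Iic a ∩ Ioc c 1 = Ioc c a` exact for `a ≤ 1`. -/
noncomputable def unifPi (ι : Type*) [Fintype ι] (c : ℝ) : Measure (ι → ℝ) :=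
  Measure.pi fun _ => volume.restrict (Set.Ioc c 1)

instance (ι : Type*) [Fintype ι] (c : ℝ) : IsFiniteMeasure (unifPi ι c) := by
  unfold unifPi
  infer_instance

/-- `x ∈ orderStatsLE ι t` iff the `j`-th smallest coordinate of `x` is `≤ t j` for
`1 ≤ j ≤ |ι|`. -/
def orderStatsLE (ι : Type*) [Fintype ι] (t : ℕ → ℝ) : Set (ι → ℝ) :=
  {x | ∀ j ∈ Icc 1 (Fintype.card ι), j ≤ #{i | x i ≤ t j}}

lemma Psi_eq_unifPi (k : ℕ) (t : ℕ → ℝ) :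
    Psi k t = (unifPi (Fin k) 0 (orderStatsLE (Fin k) t)).toReal := by
  rw [Psi, iidUnif, unifM, Measure.restrict_congr_set Ioo_ae_eq_Ioc, orderStatsLE,
    Fintype.card_fin]
  rfl

section OrderStats

variable {ι : Type*} [Fintype ι]

lemma filter_le_eq_iff {x : ι → ℝ} {a : ℝ} {S : Finset ι} :
    ({i | x i ≤ a} : Finset ι) = S ↔ (∀ i : S, x i ≤ a) ∧ ∀ i : {i // i ∉ S}, a < x i := by
  simp only [Finset.ext_iff, mem_filter, mem_univ, true_and, Subtype.forall]
  constructor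
  · intro h
    exact ⟨fun i hi => (h i).2 hi, fun i hi => not_le.1 fun hle => hi ((h i).1 hle)⟩
  · rintro ⟨hS, hSc⟩ i
    exact ⟨fun hle => by_contra fun hi => (hSc i hi).not_ge hle, hS i⟩

lemma measurableSet_filter_le_eq (a : ℝ) (S : Finset ι) :
    MeasurableSet {x : ι → ℝ | ({i | x i ≤ a} : Finset ι) = S} := by
  simp only [Finset.ext_iff, mem_filter, mem_univ, true_and, Set.ofPred_forall]
  exact .iInter fun i => measurableSet_setOfPred.2 <|
    (measurableSet_setOfPred.1 (measurableSet_le (measurable_pi_apply i) measurable_const)).iff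
      measurable_const

lemma card_filter_le_eq_card_add {x : ι → ℝ} {a b : ℝ} {S : Finset ι}
    (hS : ({i | x i ≤ a} : Finset ι) = S) (hab : a ≤ b) :
    #{i | x i ≤ b} = #S + #{i : {i // i ∉ S} | x i ≤ b} := by
  have hle : ∀ i : S, x i ≤ b := fun i => ((filter_le_eq_iff.1 hS).1 i).trans hab
  simp only [card_filter]
  rw [← Fintype.sum_subtype_add_sum_subtype (· ∈ S)]
  simp [hle]

lemma measure_eq_sum_inter_filter_le_eq (μ : Measure (ι → ℝ)) (a : ℝ) (E : Set (ι → ℝ)) :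
    μ E = ∑ S : Finset ι, μ (E ∩ {x | ({i | x i ≤ a} : Finset ι) = S}) := by
  have := sum_measure_preimage_singleton (μ := μ.restrict E)
    (f := fun x : ι → ℝ => ({i | x i ≤ a} : Finset ι)) univ
    fun S _ => measurableSet_filter_le_eq a S
  rw [coe_univ, Set.preimage_univ, Measure.restrict_apply_univ] at this
  rw [← this]
  refine sum_congr rfl fun S _ => ?_
  exact (Measure.restrict_apply (measurableSet_filter_le_eq a S)).trans
    (congrArg μ (Set.inter_comm _ _))

lemma toReal_measure_eq_sum_choose (μ : Measure (ι → ℝ)) [IsFiniteMeasure μ] (a : ℝ)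
    (E : Set (ι → ℝ)) (f : ℕ → ℝ)
    (hf : ∀ S : Finset ι, (μ (E ∩ {x | ({i | x i ≤ a} : Finset ι) = S})).toReal = f #S) :
    (μ E).toReal = ∑ m ∈ range (Fintype.card ι + 1), ((Fintype.card ι).choose m : ℝ) * f m := by
  rw [measure_eq_sum_inter_filter_le_eq μ a E, ENNReal.toReal_sum fun S _ => measure_ne_top _ _,
    Fintype.sum_congr _ _ hf, ← powerset_univ, sum_powerset_apply_card, card_univ]
  simp only [nsmul_eq_mul]

lemma orderStatsLE_inter_filter_le_eq_empty [Nonempty ι] {t : ℕ → ℝ} {a : ℝ} (ha : t 1 ≤ a) :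
    orderStatsLE ι t ∩ {x | ({i | x i ≤ a} : Finset ι) = ∅} = ∅ := by
  ext x
  simp only [orderStatsLE, Set.mem_inter_iff, Set.mem_ofPred_eq, Set.mem_empty_iff_false,
    iff_false, not_and]
  intro hx hS
  have hpos := hx 1 (mem_Icc.2 ⟨le_rfl, Fintype.card_pos⟩)
  have hsub : ({i | x i ≤ t 1} : Finset ι) ⊆ ({i | x i ≤ a} : Finset ι) :=
    monotone_filter_right _ fun i _ hi => le_trans hi ha
  rw [hS, subset_empty] at hsub
  rw [hsub, card_empty] at hpos
  omega

lemma unifPi_orderStatsLE_of_isEmpty [IsEmpty ι] (c : ℝ) (t : ℕ → ℝ) :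
    unifPi ι c (orderStatsLE ι t) = 1 := by
  simp [unifPi, orderStatsLE]

lemma mem_orderStatsLE_iff_of_filter_eq {t : ℕ → ℝ}
    (ht : ∀ j ∈ Icc 1 (Fintype.card ι), t 1 ≤ t j) {x : ι → ℝ} {S : Finset ι}
    (hS : ({i | x i ≤ t 1} : Finset ι) = S) :
    x ∈ orderStatsLE ι t ↔
      (fun i : {i // i ∉ S} => x i) ∈ orderStatsLE {i // i ∉ S} (fun r => t (#S + r)) := by
  have hcard : Fintype.card {i // i ∉ S} = Fintype.card ι - #S := by
    simp [Fintype.card_subtype_compl]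
  have hSle : #S ≤ Fintype.card ι := card_le_univ S
  simp only [orderStatsLE, Set.mem_ofPred_eq, mem_Icc, hcard]
  constructor
  · intro h r hr
    have := h (#S + r) (by omega)
    rw [card_filter_le_eq_card_add hS (ht _ (by simp only [mem_Icc]; omega))] at this
    omega
  · intro h j hj
    rw [card_filter_le_eq_card_add hS (ht _ (by simpa only [mem_Icc] using hj))]
    by_cases hjS : j ≤ #S
    · omega
    · have := h (j - #S) (by omega)
      rw [Nat.add_sub_cancel' (by omega)] at this
      omega

lemma orderStatsLE_inter_filter_eq {t : ℕ → ℝ}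
    (ht : ∀ j ∈ Icc 1 (Fintype.card ι), t 1 ≤ t j) (S : Finset ι) :
    orderStatsLE ι t ∩ {x | ({i | x i ≤ t 1} : Finset ι) = S} =
      MeasurableEquiv.piEquivPiSubtypeProd (fun _ => ℝ) (· ∈ S) ⁻¹'
        (Set.univ.pi (fun _ => Set.Iic (t 1)) ×ˢ
          (orderStatsLE {i // i ∉ S} (fun r => t (#S + r)) ∩
            Set.univ.pi (fun _ => Set.Ioi (t 1)))) := by
  ext x
  simp only [Set.mem_inter_iff, Set.mem_ofPred_eq, Set.mem_preimage, Set.mem_prod,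
    Set.mem_univ_pi, Set.mem_Iic, Set.mem_Ioi, MeasurableEquiv.piEquivPiSubtypeProd_apply]
  constructor
  · rintro ⟨hx, hS⟩
    exact ⟨(filter_le_eq_iff.1 hS).1, (mem_orderStatsLE_iff_of_filter_eq ht hS).1 hx,
      (filter_le_eq_iff.1 hS).2⟩
  · rintro ⟨hS, hx, hSc⟩
    have hS := filter_le_eq_iff.2 ⟨hS, hSc⟩
    exact ⟨(mem_orderStatsLE_iff_of_filter_eq ht hS).2 hx, hS⟩

lemma unifPi_orderStatsLE_inter_filter_eq {t : ℕ → ℝ}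
    (ht : ∀ j ∈ Icc 1 (Fintype.card ι), t 1 ≤ t j) {c : ℝ} (hc : c ≤ t 1) (ht1 : t 1 ≤ 1)
    (S : Finset ι) :
    unifPi ι c (orderStatsLE ι t ∩ {x | ({i | x i ≤ t 1} : Finset ι) = S}) =
      ENNReal.ofReal (t 1 - c) ^ #S *
        unifPi {i // i ∉ S} (t 1) (orderStatsLE {i // i ∉ S} (fun r => t (#S + r))) := by
  rw [orderStatsLE_inter_filter_eq ht, unifPi,
    (measurePreserving_piEquivPiSubtypeProd _ _).measure_preimage_equiv, Measure.prod_prod]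
  congr 1
  · simp only [Measure.pi_pi, prod_const, card_univ, Fintype.card_coe,
      Measure.restrict_apply measurableSet_Iic, Set.Iic_inter_Ioc_of_le ht1, Real.volume_Ioc]
  · rw [← Measure.restrict_apply' (MeasurableSet.univ_pi fun _ => measurableSet_Ioi),
      Measure.restrict_pi_pi]
    simp only [Measure.restrict_restrict measurableSet_Ioi, Set.inter_comm (Set.Ioi _),
      Set.Ioc_inter_Ioi, sup_eq_right.2 hc]
    rfl

end OrderStats

lemma sum_choose_mul_abel (n : ℕ) (a b : ℝ) :
    ∑ m ∈ range (n + 2), ((n + 1).choose m : ℝ) *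
      (if m = 0 then 0 else a ^ m * if m = n + 1 then 1 else m * b * ((n + 1) * b) ^ (n - m))
      = a * (a + (n + 1) * b) ^ n := by
  rw [sum_range_succ', add_pow, mul_sum]
  simp only [if_pos, add_eq_zero, one_ne_zero, and_false, if_false, mul_zero, add_zero,
    add_left_inj]
  refine sum_congr rfl fun i hi => ?_
  rcases eq_or_lt_of_le (Nat.lt_succ_iff.1 (mem_range.1 hi)) with rfl | hin
  · simp [pow_succ]
    ring
  · have hchoose : ((n + 1).choose (i + 1) : ℝ) * (i + 1) = (n + 1) * n.choose i := by
      exact_mod_cast (Nat.add_one_mul_choose_eq n i).symm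
    rw [if_neg (by omega), show n - i = n - (i + 1) + 1 by omega]
    push_cast
    linear_combination (a ^ (i + 1) * b * ((n + 1) * b) ^ (n - (i + 1))) * hchoose

lemma toReal_unifPi_orderStatsLE_linear_inter_filter_eq {ι : Type*} [Fintype ι] [Nonempty ι]
    {c ν₁ ν₂ : ℝ} (hc : c ≤ ν₁ + ν₂) (hn : ν₁ + Fintype.card ι * ν₂ ≤ 1) (hν₂ : 0 ≤ ν₂)
    (S : Finset ι) :
    (unifPi ι c (orderStatsLE ι (fun j => ν₁ + j * ν₂) ∩
        {x | ({i | x i ≤ ν₁ + ν₂} : Finset ι) = S})).toReal =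
      (ν₁ + ν₂ - c) ^ #S * (unifPi {i // i ∉ S} (ν₁ + ν₂)
        (orderStatsLE {i // i ∉ S} fun r => ν₁ + #S * ν₂ + r * ν₂)).toReal := by
  set t : ℕ → ℝ := fun j => ν₁ + j * ν₂
  have ht1 : t 1 = ν₁ + ν₂ := by simp [t]
  have ht : ∀ j ∈ Icc 1 (Fintype.card ι), t 1 ≤ t j := fun j hj => by
    have : (1 : ℝ) ≤ j := by exact_mod_cast (mem_Icc.1 hj).1
    rw [ht1]
    nlinarith
  have hshift : (fun r => t (#S + r)) = fun r : ℕ => ν₁ + #S * ν₂ + r * ν₂ := by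
    funext r
    simp only [t]
    push_cast
    ring
  have htle : t 1 ≤ t (Fintype.card ι) := ht _ (mem_Icc.2 ⟨Fintype.card_pos, le_rfl⟩)
  rw [← ht1, unifPi_orderStatsLE_inter_filter_eq ht (ht1 ▸ hc) (htle.trans hn), hshift, ht1,
    ENNReal.toReal_mul, ENNReal.toReal_pow, ENNReal.toReal_ofReal (sub_nonneg.2 hc)]

theorem toReal_unifPi_orderStatsLE_linear {ι : Type*} [Fintype ι] [Nonempty ι] {c ν₁ ν₂ : ℝ}
    (hc : c ≤ ν₁ + ν₂) (hn : ν₁ + Fintype.card ι * ν₂ ≤ 1) (hν₂ : 0 ≤ ν₂) :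
    (unifPi ι c (orderStatsLE ι fun j => ν₁ + j * ν₂)).toReal =
      (ν₁ + ν₂ - c) * (ν₁ + ν₂ - c + Fintype.card ι * ν₂) ^ (Fintype.card ι - 1) := by
  induction hcard : Fintype.card ι using Nat.strong_induction_on generalizing ι c ν₁ with
  | _ n ih =>
  obtain ⟨N, rfl⟩ : ∃ N, n = N + 1 := Nat.exists_eq_add_one.2 (hcard ▸ Fintype.card_pos)
  set f : ℕ → ℝ := fun m => if m = 0 then 0 else (ν₁ + ν₂ - c) ^ m *
    if m = N + 1 then 1 else m * ν₂ * ((N + 1) * ν₂) ^ (N - m)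
  have hterm : ∀ S : Finset ι,
      (unifPi ι c (orderStatsLE ι (fun j => ν₁ + j * ν₂) ∩
        {x | ({i | x i ≤ ν₁ + ν₂} : Finset ι) = S})).toReal = f #S := by
    intro S
    simp only [f]
    rcases S.eq_empty_or_nonempty with rfl | hS
    · rw [orderStatsLE_inter_filter_le_eq_empty (by simp)]
      simp
    have hSpos := hS.card_pos
    have hSle : #S ≤ N + 1 := hcard ▸ card_le_univ S
    have hcardc : Fintype.card {i // i ∉ S} = N + 1 - #S := by
      simp [Fintype.card_subtype_compl, hcard]
    rw [if_neg hSpos.ne', toReal_unifPi_orderStatsLE_linear_inter_filter_eq hc hn hν₂]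
    congr 1
    split_ifs with hSn
    · have : IsEmpty {i // i ∉ S} := Fintype.card_eq_zero_iff.1 (by omega)
      simp [unifPi_orderStatsLE_of_isEmpty]
    · have : Nonempty {i // i ∉ S} := Fintype.card_pos_iff.1 (by omega)
      have hcast : ((N + 1 - #S : ℕ) : ℝ) = N + 1 - #S := by
        rw [Nat.cast_sub hSle]
        push_cast
        ring
      have hSν₂ : (0 : ℝ) ≤ #S * ν₂ := by positivity
      rw [hcard, Nat.cast_add_one] at hn
      rw [ih (N + 1 - #S) (by omega) (by linarith) (by rw [hcardc, hcast]; linear_combination hn)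
        hcardc, hcast, show N + 1 - #S - 1 = N - #S by omega]
      ring
  rw [toReal_measure_eq_sum_choose _ _ _ f hterm, hcard, sum_choose_mul_abel]
  push_cast
  simp

/-- Finner–Roters identity: for a linearly spaced threshold `t_j = ν₁ + j·ν₂`,
`Ψ_k(ν₁+ν₂, ..., ν₁+kν₂) = (ν₁+ν₂)(ν₁+(k+1)ν₂)^(k-1)`. -/
theorem psi_linear (k : ℕ) (hk : 1 ≤ k) (ν₁ ν₂ : ℝ) (h1 : 0 ≤ ν₁ + ν₂)
    (h2 : ν₁ + k * ν₂ ≤ 1) (h3 : 0 ≤ ν₂) :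
    Psi k (fun j => ν₁ + j * ν₂) = (ν₁ + ν₂) * (ν₁ + (k + 1) * ν₂) ^ (k - 1) := by
  have : Nonempty (Fin k) := ⟨⟨0, hk⟩⟩
  rw [Psi_eq_unifPi, toReal_unifPi_orderStatsLE_linear (by simpa using h1) (by simpa using h2) h3]
  simp only [Fintype.card_fin, sub_zero]
  ring
end

section
/- Steck's recursion: for any nondecreasing threshold t = (t₁,...,tₖ) ∈ [0,1]^k, Ψₖ(t₁,...,tₖ) = (tₖ)^k − Σ_{j=0}^{k−2} C(k,j) (tₖ − t_{j+1})^{k−j} Ψⱼ(t₁,...,tⱼ). -/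
/-!
Split the event `{∀ i, Uᵢ ≤ t k}`, of probability `t k ^ k`, according to the first index
`j + 1` at which the bound `U₍ⱼ₊₁₎ ≤ t (j + 1)` fails. On that piece exactly `j` of the
variables lie below `t (j + 1)`: they satisfy the first `j` bounds, and the remaining `k - j`
lie in `(t (j + 1), t k]`. Summing over the `C(k, j)` choices of these `j` variables gives the
term `C(k, j) (t k - t (j + 1)) ^ (k - j) Ψⱼ`, and for `j = k - 1` the interval is empty.
The argument never uses uniformity: for any σ-finite measure `μ` on `ℝ` it gives the
recursion with `μ (Iic ·)` and `μ (Ioc · ·)` in place of lengths.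
-/

open MeasureTheory Finset
open scoped Classical

lemma Finset.card_filter_coe {ι : Type*} (S : Finset ι) (p : ι → Prop) [DecidablePred p] :
    #{i : S | p i} = #{i ∈ S | p i} := by
  rw [univ_eq_attach, filter_attach, card_map, card_attach]

section OrderStatistics

variable {ι κ : Type*} [Fintype ι] [Fintype κ]

def orderStatLE (ι : Type*) [Fintype ι] (n : ℕ) (t : ℕ → ℝ) : Set (ι → ℝ) :=
  {x | ∀ j ∈ Finset.Icc 1 n, j ≤ #{i | x i ≤ t j}}

lemma measurable_card_filter_le (c : ℝ) : Measurable fun x : ι → ℝ => #{i | x i ≤ c} := by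
  simp only [card_filter]
  exact Finset.measurable_sum _ fun i _ =>
    Measurable.ite (measurableSet_le (measurable_pi_apply i) measurable_const)
      measurable_const measurable_const

lemma measurableSet_orderStatLE (n : ℕ) (t : ℕ → ℝ) : MeasurableSet (orderStatLE ι n t) := by
  simp only [orderStatLE, Set.ofPred_forall]
  exact .biInter (Set.to_countable _) fun j _ => measurable_card_filter_le (t j) measurableSet_Ici

@[simp]
lemma orderStatLE_zero (t : ℕ → ℝ) : orderStatLE ι 0 t = Set.univ := by
  simp [orderStatLE]

lemma antitone_orderStatLE (t : ℕ → ℝ) : Antitone (orderStatLE ι · t) :=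
  fun _ _ hmn _ hx j hj => hx j (Icc_subset_Icc_right hmn hj)

lemma mem_orderStatLE_succ {n : ℕ} {t : ℕ → ℝ} {x : ι → ℝ} :
    x ∈ orderStatLE ι (n + 1) t ↔ x ∈ orderStatLE ι n t ∧ n + 1 ≤ #{i | x i ≤ t (n + 1)} := by
  simp only [orderStatLE, Set.mem_ofPred_eq,
    ← insert_Icc_right_eq_Icc_add_one (Nat.le_add_left 1 n), forall_mem_insert]
  tauto

lemma le_of_mem_orderStatLE {n : ℕ} {t : ℕ → ℝ} {x : ι → ℝ} (hx : x ∈ orderStatLE ι n t)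
    (hn : Fintype.card ι = n) (i : ι) : x i ≤ t n := by
  have hpos : 1 ≤ n := hn ▸ Fintype.card_pos_iff.2 ⟨i⟩
  have hcard : #{i | x i ≤ t n} = #(univ : Finset ι) :=
    le_antisymm (card_le_univ _) (hn ▸ hx n (mem_Icc.2 ⟨hpos, le_rfl⟩))
  exact filter_card_eq hcard i (mem_univ i)

lemma pi_orderStatLE_congr (μ : Measure ℝ) [SigmaFinite μ] (e : ι ≃ κ) (n : ℕ) (t : ℕ → ℝ) :
    Measure.pi (fun _ : κ => μ) (orderStatLE κ n t)
      = Measure.pi (fun _ : ι => μ) (orderStatLE ι n t) := by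
  have h := measurePreserving_arrowCongr' (fun _ : ι => μ) (fun _ : κ => μ) e
    (MeasurableEquiv.refl ℝ) fun _ => .id μ
  rw [← h.measure_preimage (measurableSet_orderStatLE n t).nullMeasurableSet]
  congr 1
  ext x
  have hcard (c : ℝ) : #{j | x (e.symm j) ≤ c} = #{i | x i ≤ c} :=
    card_equiv e.symm fun j => by simp
  simp [orderStatLE, MeasurableEquiv.arrowCongr', Equiv.arrowCongr', hcard]

def orderStatBlock (S : Finset ι) (m : ℕ) (t : ℕ → ℝ) (a b : ℝ) : Set (ι → ℝ) :=
  {x | (fun i : S => x i) ∈ orderStatLE S m t ∧ ∀ i ∈ Sᶜ, x i ∈ Set.Ioc a b}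

lemma orderStatBlock_eq_preimage (S : Finset ι) (m : ℕ) (t : ℕ → ℝ) (a b : ℝ) :
    orderStatBlock S m t a b = MeasurableEquiv.piEquivPiSubtypeProd (fun _ => ℝ) (· ∈ S) ⁻¹'
      (orderStatLE S m t ×ˢ Set.univ.pi fun _ => Set.Ioc a b) := by
  ext x
  simp [orderStatBlock, MeasurableEquiv.piEquivPiSubtypeProd]

lemma measurableSet_orderStatBlock (S : Finset ι) (m : ℕ) (t : ℕ → ℝ) (a b : ℝ) :
    MeasurableSet (orderStatBlock S m t a b) := by
  rw [orderStatBlock_eq_preimage]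
  exact MeasurableEquiv.measurable _
    ((measurableSet_orderStatLE m t).prod (.univ_pi fun _ => measurableSet_Ioc))

lemma pi_orderStatBlock (μ : Measure ℝ) [SigmaFinite μ] {S : Finset ι} {m : ℕ} (hS : #S = m)
    (t : ℕ → ℝ) (a b : ℝ) :
    Measure.pi (fun _ : ι => μ) (orderStatBlock S m t a b)
      = Measure.pi (fun _ : Fin m => μ) (orderStatLE (Fin m) m t)
        * μ (Set.Ioc a b) ^ (Fintype.card ι - m) := by
  have e : Fin m ≃ S := (Fintype.equivFinOfCardEq (by rw [Fintype.card_coe, hS])).symm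
  rw [orderStatBlock_eq_preimage,
    (measurePreserving_piEquivPiSubtypeProd (fun _ => μ) (· ∈ S)).measure_preimage
      ((measurableSet_orderStatLE m t).prod
        (.univ_pi fun _ => measurableSet_Ioc)).nullMeasurableSet,
    Measure.prod_prod, Measure.pi_pi, prod_const, card_univ, Fintype.card_subtype_compl,
    Fintype.card_coe, hS]
  congr 1
  convert pi_orderStatLE_congr μ e m t

lemma filter_le_eq_of_mem_orderStatBlock {m : ℕ} {t : ℕ → ℝ}
    (ht : MonotoneOn t (Set.Icc 1 (m + 1))) {S : Finset ι} (hS : #S = m) {b : ℝ} {x : ι → ℝ}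
    (hx : x ∈ orderStatBlock S m t (t (m + 1)) b) :
    ({i | x i ≤ t (m + 1)} : Finset ι) = S := by
  ext i
  simp only [mem_filter, mem_univ, true_and]
  by_cases hi : i ∈ S
  · have hm : 1 ≤ m := hS ▸ card_pos.2 ⟨i, hi⟩
    have hxi : x i ≤ t m := le_of_mem_orderStatLE hx.1 (by rw [Fintype.card_coe, hS]) ⟨i, hi⟩
    exact iff_of_true (hxi.trans (ht ⟨hm, by omega⟩ ⟨by omega, le_rfl⟩ (by omega))) hi
  · exact iff_of_false (not_le.2 (hx.2 i (mem_compl.2 hi)).1) hi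

lemma orderStatLE_inter_diff_eq_biUnion {m : ℕ} {t : ℕ → ℝ}
    (ht : MonotoneOn t (Set.Icc 1 (m + 1))) {b : ℝ} (hb : t (m + 1) ≤ b) :
    (orderStatLE ι m t ∩ Set.univ.pi fun _ => Set.Iic b)
        \ (orderStatLE ι (m + 1) t ∩ Set.univ.pi fun _ => Set.Iic b)
      = ⋃ S ∈ powersetCard m (univ : Finset ι), orderStatBlock S m t (t (m + 1)) b := by
  ext x
  simp only [Set.mem_sdiff, Set.mem_inter_iff, Set.mem_iUnion, mem_powersetCard_univ,
    exists_prop, mem_orderStatLE_succ, Set.mem_univ_pi, Set.mem_Iic]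
  constructor
  · rintro ⟨⟨hxm, hxb⟩, hx⟩
    set S : Finset ι := {i | x i ≤ t (m + 1)}
    have hSle : #S ≤ m := by
      by_contra h
      exact hx ⟨⟨hxm, by omega⟩, hxb⟩
    have hSge : m ≤ #S := by
      rcases m.eq_zero_or_pos with rfl | hm
      · exact Nat.zero_le _
      · exact (hxm m (mem_Icc.2 ⟨hm, le_rfl⟩)).trans (card_le_card (monotone_filter_right _
          fun i _ hi => hi.trans (ht ⟨hm, by omega⟩ ⟨by omega, le_rfl⟩ (by omega))))
    refine ⟨S, le_antisymm hSle hSge, fun l hl => ?_, fun i hi => ⟨?_, hxb i⟩⟩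
    · obtain ⟨hl, hlm⟩ := mem_Icc.1 hl
      rw [card_filter_coe S (x · ≤ t l), filter_filter]
      exact (hxm l (mem_Icc.2 ⟨hl, hlm⟩)).trans (card_le_card (monotone_filter_right _
        fun i _ hi => ⟨hi.trans (ht ⟨hl, by omega⟩ ⟨by omega, le_rfl⟩ (by omega)), hi⟩))
    · simpa [S] using hi
  · rintro ⟨S, hS, hxS⟩
    have hfix := filter_le_eq_of_mem_orderStatBlock ht hS hxS
    have hxb : ∀ i, x i ≤ b := by
      intro i
      by_cases hi : i ∈ S
      · rw [← hfix, mem_filter] at hi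
        exact hi.2.trans hb
      · exact (hxS.2 i (mem_compl.2 hi)).2
    refine ⟨⟨fun l hl => (hxS.1 l hl).trans ?_, hxb⟩, fun h => ?_⟩
    · rw [card_filter_coe S (x · ≤ t l)]
      exact card_le_card (filter_subset_filter _ (subset_univ S))
    · have := h.1.2
      rw [hfix, hS] at this
      omega

lemma pi_orderStatLE_inter_diff (μ : Measure ℝ) [SigmaFinite μ] {m : ℕ} {t : ℕ → ℝ}
    (ht : MonotoneOn t (Set.Icc 1 (m + 1))) {b : ℝ} (hb : t (m + 1) ≤ b) :
    Measure.pi (fun _ : ι => μ) ((orderStatLE ι m t ∩ Set.univ.pi fun _ => Set.Iic b)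
        \ (orderStatLE ι (m + 1) t ∩ Set.univ.pi fun _ => Set.Iic b))
      = (Fintype.card ι).choose m * μ (Set.Ioc (t (m + 1)) b) ^ (Fintype.card ι - m)
        * Measure.pi (fun _ : Fin m => μ) (orderStatLE (Fin m) m t) := by
  have hdisj : (powersetCard m (univ : Finset ι) : Set (Finset ι)).PairwiseDisjoint
      fun S => orderStatBlock S m t (t (m + 1)) b := by
    intro S hS S' hS' hne
    refine Set.disjoint_left.2 fun x hx hx' => hne ?_
    rw [← filter_le_eq_of_mem_orderStatBlock ht (mem_powersetCard_univ.1 hS) hx,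
      filter_le_eq_of_mem_orderStatBlock ht (mem_powersetCard_univ.1 hS') hx']
  rw [orderStatLE_inter_diff_eq_biUnion ht hb,
    measure_biUnion_finset hdisj fun S _ => measurableSet_orderStatBlock S m t _ b,
    sum_congr rfl fun S hS => pi_orderStatBlock μ (mem_powersetCard_univ.1 hS) t _ b,
    sum_const, card_powersetCard, card_univ, nsmul_eq_mul]
  ring

end OrderStatistics

lemma measure_eq_add_sum_sdiff {α : Type*} [MeasurableSpace α] (μ : Measure α) {s : ℕ → Set α}
    (hs : Antitone s) (hsm : ∀ n, MeasurableSet (s n)) (n : ℕ) :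
    μ (s 0) = μ (s n) + ∑ m ∈ range n, μ (s m \ s (m + 1)) := by
  induction n with
  | zero => simp
  | succ n ih =>
    have hstep : μ (s n) = μ (s (n + 1)) + μ (s n \ s (n + 1)) := by
      rw [measure_add_sdiff (hsm _).nullMeasurableSet, Set.union_eq_right.2 (hs n.le_succ)]
    rw [ih, hstep, sum_range_succ]
    ring

theorem steck_measure (μ : Measure ℝ) [SigmaFinite μ] (k : ℕ) (t : ℕ → ℝ)
    (ht : MonotoneOn t (Set.Icc 1 k)) :
    μ (Set.Iic (t k)) ^ k = Measure.pi (fun _ : Fin k => μ) (orderStatLE (Fin k) k t)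
      + ∑ j ∈ range k, k.choose j * μ (Set.Ioc (t (j + 1)) (t k)) ^ (k - j)
        * Measure.pi (fun _ : Fin j => μ) (orderStatLE (Fin j) j t) := by
  set T : Set (Fin k → ℝ) := Set.univ.pi fun _ => Set.Iic (t k)
  have hT : orderStatLE (Fin k) k t ∩ T = orderStatLE (Fin k) k t :=
    Set.inter_eq_left.2 fun x hx =>
      Set.mem_univ_pi.2 (le_of_mem_orderStatLE hx (Fintype.card_fin k))
  calc μ (Set.Iic (t k)) ^ k
      = Measure.pi (fun _ : Fin k => μ) (orderStatLE (Fin k) 0 t ∩ T) := by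
        rw [orderStatLE_zero, Set.univ_inter, Measure.pi_pi, prod_const, card_univ,
          Fintype.card_fin]
    _ = _ := measure_eq_add_sum_sdiff _
          (fun _ _ hmn => Set.inter_subset_inter_left T (antitone_orderStatLE t hmn))
          (fun m => (measurableSet_orderStatLE m t).inter (.univ_pi fun _ => measurableSet_Iic)) k
    _ = _ := by
      rw [hT]
      refine congrArg _ (sum_congr rfl fun j hj => ?_)
      dsimp only
      have hj : j + 1 ≤ k := mem_range.1 hj
      rw [pi_orderStatLE_inter_diff μ (ht.mono (Set.Icc_subset_Icc_right hj))
        (ht ⟨by omega, hj⟩ ⟨by omega, le_rfl⟩ hj), Fintype.card_fin]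

theorem steck_measureReal (μ : Measure ℝ) [IsFiniteMeasure μ] (k : ℕ) (t : ℕ → ℝ)
    (ht : MonotoneOn t (Set.Icc 1 k)) :
    μ.real (Set.Iic (t k)) ^ k
      = (Measure.pi fun _ : Fin k => μ).real (orderStatLE (Fin k) k t)
      + ∑ j ∈ range k, k.choose j * μ.real (Set.Ioc (t (j + 1)) (t k)) ^ (k - j)
        * (Measure.pi fun _ : Fin j => μ).real (orderStatLE (Fin j) j t) := by
  have h := congrArg ENNReal.toReal (steck_measure μ k t ht)
  have hfin : ∀ j ∈ range k, k.choose j * μ (Set.Ioc (t (j + 1)) (t k)) ^ (k - j)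
      * Measure.pi (fun _ : Fin j => μ) (orderStatLE (Fin j) j t) ≠ ⊤ :=
    fun _ _ => by finiteness
  rw [ENNReal.toReal_add (by finiteness) (ENNReal.sum_ne_top.2 hfin),
    ENNReal.toReal_sum hfin] at h
  simpa only [measureReal_def, ENNReal.toReal_pow, ENNReal.toReal_mul, ENNReal.toReal_natCast]
    using h

instance : IsProbabilityMeasure unifM :=
  ⟨by simp [unifM, Real.volume_Ioo]⟩

lemma unifM_real_Ioc {a b : ℝ} (ha : 0 ≤ a) (hab : a ≤ b) (hb : b ≤ 1) :
    unifM.real (Set.Ioc a b) = b - a := by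
  rw [unifM, Measure.restrict_congr_set Ioo_ae_eq_Icc,
    measureReal_restrict_apply measurableSet_Ioc,
    Set.inter_eq_left.2 (Set.Ioc_subset_Icc_self.trans (Set.Icc_subset_Icc ha hb)),
    Real.volume_real_Ioc_of_le hab]

lemma unifM_real_Iic {c : ℝ} (h0 : 0 ≤ c) (h1 : c ≤ 1) : unifM.real (Set.Iic c) = c := by
  have h : Set.Iic c ∩ Set.Ioo 0 1 = Set.Ioc 0 c ∩ Set.Ioo 0 1 := by
    ext x
    simp only [Set.mem_inter_iff, Set.mem_Iic, Set.mem_Ioc, Set.mem_Ioo]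
    tauto
  calc unifM.real (Set.Iic c) = unifM.real (Set.Ioc 0 c) := by
        rw [unifM, measureReal_restrict_apply measurableSet_Iic,
          measureReal_restrict_apply measurableSet_Ioc, h]
    _ = c := by rw [unifM_real_Ioc le_rfl h0 h1, sub_zero]

/-- Steck's recursion for the joint c.d.f. of uniform order statistics. -/
theorem steck (k : ℕ) (hk : 1 ≤ k) (t : ℕ → ℝ)
    (ht : MonotoneOn t (Set.Icc 1 k))
    (ht01 : ∀ j ∈ Set.Icc 1 k, t j ∈ Set.Icc (0:ℝ) 1) :
    Psi k t = (t k) ^ k - ∑ j ∈ Finset.range (k - 1),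
      (k.choose j : ℝ) * (t k - t (j + 1)) ^ (k - j) * Psi j t := by
  have htk := ht01 k ⟨hk, le_rfl⟩
  have key := steck_measureReal unifM k t ht
  rw [unifM_real_Iic htk.1 htk.2] at key
  have hsum : ∑ j ∈ range k,
        (k.choose j : ℝ) * unifM.real (Set.Ioc (t (j + 1)) (t k)) ^ (k - j)
        * (Measure.pi fun _ : Fin j => unifM).real (orderStatLE (Fin j) j t)
      = ∑ j ∈ range (k - 1), (k.choose j : ℝ) * (t k - t (j + 1)) ^ (k - j) * Psi j t := by
    symm
    refine sum_subset_zero_on_sdiff (range_mono (Nat.sub_le k 1)) (fun j hj => ?_)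
      fun j hj => ?_
    · have hjk : j + 1 = k := by simp only [mem_sdiff, mem_range] at hj; omega
      rw [hjk, Set.Ioc_self, measureReal_empty, zero_pow (by omega), mul_zero, zero_mul]
    · have hj : j < k - 1 := mem_range.1 hj
      rw [unifM_real_Ioc (ht01 (j + 1) ⟨by omega, by omega⟩).1
        (ht ⟨by omega, by omega⟩ ⟨hk, le_rfl⟩ (by omega)) htk.2]
      rfl
  rw [hsum] at key
  exact eq_sub_of_add_eq key.symm
end

section
/- Step-up invariance lemma: Consider a step-up procedure with nondecreasing threshold t = (t₁,...,tₘ) applied to p-values p₁,...,pₘ, rejecting k̂ = max{k ∈ {0,...,m} : |{j : pⱼ ≤ tₖ}| ≥ k} hypotheses. For a fixed 1 ≤ ℓ ≤ m, let k̂'₍ℓ₎ be the rejection number of the step-up procedure with threshold (t_{j+ℓ})_{1≤j≤m−ℓ} applied to p_{ℓ+1},...,pₘ. Then pointwise the following three statements are equivalent: (i) pᵢ ≤ t_{k̂} for all 1 ≤ i ≤ ℓ; (ii) pᵢ ≤ t_{k̂'₍ℓ₎+ℓ} for all 1 ≤ i ≤ ℓ; (iii) k̂ = k̂'₍ℓ₎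 + ℓ. -/
/-! Split the p-values into the first `ℓ` and the remaining `m - ℓ`. With `k̂'` the rejection
number of the shifted procedure, maximality of `k̂` forces `k̂ - ℓ ≤ k̂'`, so always `k̂ ≤ k̂' + ℓ`;
and exactly `k̂'` of the remaining p-values lie below `t (k̂' + ℓ)`. Hence level `k̂' + ℓ` passes
the step-up test, i.e. `k̂ = k̂' + ℓ`, iff all of the first `ℓ` p-values lie below `t (k̂' + ℓ)`;
monotonicity of `t` and `k̂ ≤ k̂' + ℓ` give the remaining implication. -/

open Finset
open scoped Classical

/-- Rejection number of the step-up procedure with threshold `t` (1-indexed,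
`t 0 = 0` by convention) applied to the p-values `p 1, ..., p m`:
the largest `k ≤ m` with `#{j ∈ {1,...,m} : p j ≤ t k} ≥ k`. -/
noncomputable def kSU (m : ℕ) (t : ℕ → ℝ) (p : ℕ → ℝ) : ℕ :=
  Nat.findGreatest (fun k => k ≤ ((Finset.Icc 1 m).filter (fun j => p j ≤ t k)).card) m

theorem card_filter_Icc_eq_add (q : ℕ → Prop) [DecidablePred q] {ℓ m : ℕ} (hℓm : ℓ ≤ m) :
    #{j ∈ Icc 1 m | q j} = #{j ∈ Icc 1 ℓ | q j} + #{j ∈ Icc 1 (m - ℓ) | q (j + ℓ)} := by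
  have hsplit : Icc 1 m = Icc 1 ℓ ∪ Icc (1 + ℓ) m := by
    ext j; simp only [mem_union, mem_Icc]; omega
  have hshift : #{j ∈ Icc 1 (m - ℓ) | q (j + ℓ)} = #{j ∈ Icc (1 + ℓ) m | q j} := by
    rw [← Nat.sub_add_cancel hℓm, ← map_add_right_Icc, filter_map, card_map, Nat.add_sub_cancel]
    rfl
  rw [hshift, hsplit, filter_union, card_union_of_disjoint (disjoint_filter_filter ?_)]
  exact disjoint_left.2 fun j hj hj' => by simp only [mem_Icc] at hj hj'; omega

theorem card_filter_Icc_le (q : ℕ → Prop) [DecidablePred q] (ℓ : ℕ) :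
    #{j ∈ Icc 1 ℓ | q j} ≤ ℓ := by
  simpa using card_filter_le (Icc 1 ℓ) q

theorem le_card_filter_Icc_iff {q : ℕ → Prop} [DecidablePred q] {ℓ : ℕ} :
    ℓ ≤ #{j ∈ Icc 1 ℓ | q j} ↔ ∀ i ∈ Icc 1 ℓ, q i := by
  rw [← card_filter_eq_iff, Nat.card_Icc, Nat.add_sub_cancel, le_antisymm_iff,
    and_iff_right (card_filter_Icc_le q ℓ)]

theorem MonotoneOn.comp_add_const_Icc {t : ℕ → ℝ} {ℓ m : ℕ} (ht : MonotoneOn t (Set.Icc 0 m))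
    (hℓm : ℓ ≤ m) : MonotoneOn (fun k => t (k + ℓ)) (Set.Icc 0 (m - ℓ)) :=
  fun a ha b hb hab =>
    ht ⟨Nat.zero_le _, by have := ha.2; omega⟩ ⟨Nat.zero_le _, by have := hb.2; omega⟩ (by omega)

section kSU

variable {m k : ℕ} {t p : ℕ → ℝ}

theorem kSU_le : kSU m t p ≤ m := Nat.findGreatest_le m

theorem kSU_le_card : kSU m t p ≤ #{j ∈ Icc 1 m | p j ≤ t (kSU m t p)} :=
  Nat.findGreatest_spec (P := fun k => k ≤ #{j ∈ Icc 1 m | p j ≤ t k}) (Nat.zero_le m)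
    (Nat.zero_le _)

theorem le_kSU (hkm : k ≤ m) (hk : k ≤ #{j ∈ Icc 1 m | p j ≤ t k}) : k ≤ kSU m t p :=
  Nat.le_findGreatest hkm hk

theorem card_lt_of_kSU_lt (hk : kSU m t p < k) (hkm : k ≤ m) :
    #{j ∈ Icc 1 m | p j ≤ t k} < k :=
  not_le.1 (Nat.findGreatest_is_greatest (P := fun k => k ≤ #{j ∈ Icc 1 m | p j ≤ t k}) hk hkm)

theorem card_filter_kSU_eq (ht : MonotoneOn t (Set.Icc 0 m)) :
    #{j ∈ Icc 1 m | p j ≤ t (kSU m t p)} = kSU m t p := by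
  refine le_antisymm ?_ kSU_le_card
  rcases kSU_le.eq_or_lt with hK | hK
  · exact (card_filter_Icc_le _ m).trans hK.ge
  · have htK : t (kSU m t p) ≤ t (kSU m t p + 1) :=
      ht ⟨Nat.zero_le _, hK.le⟩ ⟨Nat.zero_le _, hK⟩ (Nat.le_succ _)
    have hcard :
        #{j ∈ Icc 1 m | p j ≤ t (kSU m t p)} ≤ #{j ∈ Icc 1 m | p j ≤ t (kSU m t p + 1)} :=
      card_le_card (monotone_filter_right _ fun j _ hj => hj.trans htK)
    have := card_lt_of_kSU_lt (kSU m t p).lt_add_one hK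
    omega

theorem kSU_le_kSU_sub_add (ℓ : ℕ) :
    kSU m t p ≤ kSU (m - ℓ) (fun k => t (k + ℓ)) (fun j => p (j + ℓ)) + ℓ := by
  set K := kSU m t p
  rcases lt_or_ge K ℓ with hK | hK
  · omega
  have hKm : K ≤ m := kSU_le
  suffices K - ℓ ≤ kSU (m - ℓ) (fun k => t (k + ℓ)) (fun j => p (j + ℓ)) by omega
  refine le_kSU (by omega) ?_
  have hsplit := card_filter_Icc_eq_add (fun j => p j ≤ t K) (hK.trans hKm)
  have hfirst := card_filter_Icc_le (fun j => p j ≤ t K) ℓ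
  have hK_le : K ≤ #{j ∈ Icc 1 m | p j ≤ t K} := kSU_le_card
  rw [Nat.sub_add_cancel hK]
  omega

theorem kSU_eq_kSU_sub_add_iff {ℓ : ℕ} (hℓm : ℓ ≤ m) (ht : MonotoneOn t (Set.Icc 0 m)) :
    kSU m t p = kSU (m - ℓ) (fun k => t (k + ℓ)) (fun j => p (j + ℓ)) + ℓ ↔
      ∀ i ∈ Icc 1 ℓ, p i ≤ t (kSU (m - ℓ) (fun k => t (k + ℓ)) (fun j => p (j + ℓ)) + ℓ) := by
  set K' := kSU (m - ℓ) (fun k => t (k + ℓ)) (fun j => p (j + ℓ))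
  have hK'm : K' + ℓ ≤ m := by have : K' ≤ m - ℓ := kSU_le; omega
  have hcount :
      #{j ∈ Icc 1 m | p j ≤ t (K' + ℓ)} = #{j ∈ Icc 1 ℓ | p j ≤ t (K' + ℓ)} + K' := by
    rw [card_filter_Icc_eq_add _ hℓm, card_filter_kSU_eq (ht.comp_add_const_Icc hℓm)]
  rw [← le_card_filter_Icc_iff]
  constructor
  · intro hK
    have hK_le : kSU m t p ≤ #{j ∈ Icc 1 m | p j ≤ t (kSU m t p)} := kSU_le_card
    rw [hK, hcount] at hK_le
    omega
  · intro hfirst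
    exact le_antisymm (kSU_le_kSU_sub_add ℓ) (le_kSU hK'm (by rw [hcount]; omega))

end kSU

theorem stepup_invariance_general (m ℓ : ℕ) (hℓm : ℓ ≤ m)
    (t p : ℕ → ℝ) (ht : MonotoneOn t (Set.Icc 0 m)) :
    ((∀ i ∈ Finset.Icc 1 ℓ, p i ≤ t (kSU m t p)) ↔
      (∀ i ∈ Finset.Icc 1 ℓ,
        p i ≤ t (kSU (m - ℓ) (fun k => t (k + ℓ)) (fun j => p (j + ℓ)) + ℓ)))
    ∧
    ((∀ i ∈ Finset.Icc 1 ℓ, p i ≤ t (kSU m t p)) ↔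
      kSU m t p = kSU (m - ℓ) (fun k => t (k + ℓ)) (fun j => p (j + ℓ)) + ℓ) := by
  set K := kSU m t p
  set K' := kSU (m - ℓ) (fun k => t (k + ℓ)) (fun j => p (j + ℓ))
  have hiii_ii : K = K' + ℓ ↔ ∀ i ∈ Icc 1 ℓ, p i ≤ t (K' + ℓ) := kSU_eq_kSU_sub_add_iff hℓm ht
  have hi_ii (h : ∀ i ∈ Icc 1 ℓ, p i ≤ t K) : ∀ i ∈ Icc 1 ℓ, p i ≤ t (K' + ℓ) := by
    have hK'm : K' ≤ m - ℓ := kSU_le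
    have htK : t K ≤ t (K' + ℓ) :=
      ht ⟨Nat.zero_le _, kSU_le⟩ ⟨Nat.zero_le _, by omega⟩ (kSU_le_kSU_sub_add ℓ)
    exact fun i hi => (h i hi).trans htK
  have hiii_i (h : K = K' + ℓ) : ∀ i ∈ Icc 1 ℓ, p i ≤ t K := h ▸ hiii_ii.1 h
  exact ⟨⟨hi_ii, fun h => hiii_i (hiii_ii.2 h)⟩, ⟨fun h => hiii_ii.2 (hi_ii h), hiii_i⟩⟩

/-- Step-up invariance lemma: with `k̂` the rejection number of `SU(t)` on `p₁,...,pₘ` and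
`k̂'` the rejection number of the step-up procedure with threshold `(t_{j+ℓ})_{1≤j≤m-ℓ}`
applied to `p_{ℓ+1},...,pₘ`, the following are equivalent:
(i) `pᵢ ≤ t k̂` for all `1 ≤ i ≤ ℓ`; (ii) `pᵢ ≤ t (k̂'+ℓ)` for all `1 ≤ i ≤ ℓ`;
(iii) `k̂ = k̂' + ℓ`. -/
theorem stepup_invariance (m ℓ : ℕ) (hℓ : 1 ≤ ℓ) (hℓm : ℓ ≤ m)
    (t p : ℕ → ℝ) (ht0 : t 0 = 0) (ht : MonotoneOn t (Set.Icc 0 m)) :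
    ((∀ i ∈ Finset.Icc 1 ℓ, p i ≤ t (kSU m t p)) ↔
      (∀ i ∈ Finset.Icc 1 ℓ,
        p i ≤ t (kSU (m - ℓ) (fun k => t (k + ℓ)) (fun j => p (j + ℓ)) + ℓ)))
    ∧
    ((∀ i ∈ Finset.Icc 1 ℓ, p i ≤ t (kSU m t p)) ↔
      kSU m t p = kSU (m - ℓ) (fun k => t (k + ℓ)) (fun j => p (j + ℓ)) + ℓ) :=
  stepup_invariance_general m ℓ hℓm t p ht
end

section
/- Step-down invariance lemma: Consider a step-down procedure with nondecreasing threshold t = (t₁,...,tₘ) applied to p-values p₁,...,pₘ, rejecting k̃ hypotheses. Let k̃₍₁₎ (resp. k̃'₍₁₎) be the rejection number of the step-down procedure with threshold (tⱼ)_{1≤j≤m−1} (resp. (t_{j+1})_{1≤j≤m−1}) applied to p₂,...,pₘ. Then pointwise: p₁ ≤ t_{k̃} ⟺ p₁ ≤ t_{k̃₍₁₎+1} ⟺ k̃ = k̃'₍₁₎ + 1. -/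
open Finset
open scoped Classical

/-- Rejection number of the step-down procedure with threshold `t` (1-indexed,
`t 0 = 0` by convention) applied to the p-values `p 1, ..., p m`:
the largest `k ≤ m` with `#{j ∈ {1,...,m} : p j ≤ t k'} ≥ k'` for all `k' ≤ k`. -/
noncomputable def kSD (m : ℕ) (t : ℕ → ℝ) (p : ℕ → ℝ) : ℕ :=
  Nat.findGreatest
    (fun k => ∀ k' ∈ Finset.Icc 1 k,
      k' ≤ ((Finset.Icc 1 m).filter (fun j => p j ≤ t k')).card) m

/-!
Write `N k` for the number of `p 1, …, p m` below `t k` and `M k` for the same count over the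
tail `p 2, …, p m`. Then `N k = M k + [p 1 ≤ t k]`, and since `t` is nondecreasing the indicator
switches on at some index and stays on. If it is still off at `k̃₍₁₎ + 1`, the full
procedure sees only the tail counts up to there and does not get past that index, so
`p 1 > t k̃`; if it is on, the extra one carries the full procedure past `k̃₍₁₎`. Once the
indicator is on, the full procedure at index `k + 1` is the tail procedure with shifted
threshold at index `k`, whence `k̃ = k̃'₍₁₎ + 1` exactly when `p 1 ≤ t k̃`.
-/

noncomputable def countLE (m : ℕ) (t p : ℕ → ℝ) (k : ℕ) : ℕ := #{j ∈ Icc 1 m | p j ≤ t k}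

theorem countLE_succ (m : ℕ) (t p : ℕ → ℝ) (k : ℕ) :
    countLE (m + 1) t p k =
      countLE m t (fun j => p (j + 1)) k + if p 1 ≤ t k then 1 else 0 := by
  rw [countLE, countLE, ← insert_Icc_add_one_left_eq_Icc (by omega : 1 ≤ m + 1),
    ← map_add_right_Icc, filter_insert, filter_map]
  split_ifs <;> simp [card_insert_of_notMem]

theorem le_kSD_iff {m k : ℕ} {t p : ℕ → ℝ} :
    k ≤ kSD m t p ↔ k ≤ m ∧ ∀ k' ∈ Icc 1 k, k' ≤ countLE m t p k' := by
  let P k := ∀ k' ∈ Icc 1 k, k' ≤ #{j ∈ Icc 1 m | p j ≤ t k'}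
  -- the decision procedure with which `kSD` was elaborated
  let _ : DecidablePred P := fun _ => Classical.propDecidable _
  refine ⟨fun hk => ⟨hk.trans (Nat.findGreatest_le m), fun k' hk' => ?_⟩,
    fun ⟨hkm, hk⟩ => Nat.le_findGreatest hkm hk⟩
  have hspec : P (kSD m t p) := Nat.findGreatest_spec (P := P) (Nat.zero_le m)
    (fun _ hk' => by simp at hk')
  exact hspec k' (Icc_subset_Icc_right hk hk')

theorem countLE_succ_of_le {m k : ℕ} {t p : ℕ → ℝ} (h : p 1 ≤ t k) :
    countLE (m + 1) t p k = countLE m t (fun j => p (j + 1)) k + 1 := by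
  rw [countLE_succ, if_pos h]

theorem countLE_succ_of_lt {m k : ℕ} {t p : ℕ → ℝ} (h : t k < p 1) :
    countLE (m + 1) t p k = countLE m t (fun j => p (j + 1)) k := by
  rw [countLE_succ, if_neg h.not_ge, add_zero]

theorem countLE_tail_le_countLE_succ (m : ℕ) (t p : ℕ → ℝ) (k : ℕ) :
    countLE m t (fun j => p (j + 1)) k ≤ countLE (m + 1) t p k := by
  rw [countLE_succ]
  exact Nat.le_add_right _ _

theorem countLE_shift (m : ℕ) (t p : ℕ → ℝ) (k : ℕ) :
    countLE m (fun k => t (k + 1)) p k = countLE m t p (k + 1) := rfl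

theorem countLE_le (m : ℕ) (t p : ℕ → ℝ) (k : ℕ) : countLE m t p k ≤ m :=
  (card_filter_le _ _).trans (Nat.card_Icc 1 m).le

theorem countLE_mono {m i j : ℕ} {t : ℕ → ℝ} (p : ℕ → ℝ) (h : t i ≤ t j) :
    countLE m t p i ≤ countLE m t p j :=
  card_le_card (monotone_filter_right _ fun _ _ hp => hp.trans h)

theorem MonotoneOn.apply_le_of_le_of_le {β : Type*} [Preorder β] {t : ℕ → β} {m i j : ℕ}
    (ht : MonotoneOn t (Set.Icc 0 m)) (hij : i ≤ j) (hjm : j ≤ m) : t i ≤ t j :=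
  ht ⟨i.zero_le, hij.trans hjm⟩ ⟨j.zero_le, hjm⟩ hij

theorem kSD_le (m : ℕ) (t p : ℕ → ℝ) : kSD m t p ≤ m :=
  (le_kSD_iff.1 le_rfl).1

section

variable {n : ℕ} {t p : ℕ → ℝ}

theorem kSD_le_kSD_tail_shift_add_one :
    kSD (n + 1) t p ≤ kSD n (fun k => t (k + 1)) (fun j => p (j + 1)) + 1 := by
  have hK := (le_kSD_iff.1 (le_refl (kSD (n + 1) t p))).2
  suffices kSD (n + 1) t p - 1 ≤ kSD n (fun k => t (k + 1)) (fun j => p (j + 1)) by omega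
  refine le_kSD_iff.2 ⟨by have := kSD_le (n + 1) t p; omega, fun k hk => ?_⟩
  rw [mem_Icc] at hk
  have hcount := hK (k + 1) (mem_Icc.2 ⟨by omega, by omega⟩)
  rw [countLE_succ] at hcount
  rw [countLE_shift]
  split_ifs at hcount <;> omega

variable (ht : MonotoneOn t (Set.Icc 0 (n + 1)))
include ht

theorem kSD_eq_kSD_tail_shift_add_one (h : p 1 ≤ t (kSD (n + 1) t p)) :
    kSD (n + 1) t p = kSD n (fun k => t (k + 1)) (fun j => p (j + 1)) + 1 := by
  set K := kSD (n + 1) t p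
  set B := kSD n (fun k => t (k + 1)) (fun j => p (j + 1))
  obtain ⟨hBn, hB⟩ := le_kSD_iff.1 (le_refl B)
  refine kSD_le_kSD_tail_shift_add_one.antisymm (le_kSD_iff.2 ⟨by omega, fun k hk => ?_⟩)
  rw [mem_Icc] at hk
  by_cases hkK : k ≤ K
  · exact (le_kSD_iff.1 (le_refl K)).2 k (mem_Icc.2 ⟨hk.1, hkK⟩)
  obtain ⟨j, rfl⟩ : ∃ j, k = j + 1 := ⟨k - 1, by omega⟩
  rw [countLE_succ_of_le (h.trans (ht.apply_le_of_le_of_le (by omega) (by omega)))]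
  rcases j.eq_zero_or_pos with rfl | hj
  · omega
  · have hcount := hB j (mem_Icc.2 ⟨hj, by omega⟩)
    rw [countLE_shift] at hcount
    omega

theorem le_of_kSD_eq_kSD_tail_shift_add_one
    (h : kSD (n + 1) t p = kSD n (fun k => t (k + 1)) (fun j => p (j + 1)) + 1) :
    p 1 ≤ t (kSD (n + 1) t p) := by
  set K := kSD (n + 1) t p
  by_contra! hlt
  obtain ⟨hKn, hK⟩ := le_kSD_iff.1 (le_refl K)
  have hcount : ∀ k ∈ Icc 1 K, k ≤ countLE n t (fun j => p (j + 1)) k := fun k hk => by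
    rw [← countLE_succ_of_lt ((ht.apply_le_of_le_of_le (mem_Icc.1 hk).2 hKn).trans_lt hlt)]
    exact hK k hk
  have hKn' : K ≤ n := by
    by_contra!
    have := hcount (n + 1) (mem_Icc.2 ⟨by omega, by omega⟩)
    have := countLE_le n t (fun j => p (j + 1)) (n + 1)
    omega
  have : K ≤ kSD n (fun k => t (k + 1)) (fun j => p (j + 1)) := by
    refine le_kSD_iff.2 ⟨hKn', fun k hk => (hcount k hk).trans ?_⟩
    rw [countLE_shift]
    have hkK := (mem_Icc.1 hk).2
    exact countLE_mono _ (ht.apply_le_of_le_of_le (by omega) (by omega))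
  omega

theorem kSD_tail_add_one_le_kSD (h : p 1 ≤ t (kSD n t (fun j => p (j + 1)) + 1)) :
    kSD n t (fun j => p (j + 1)) + 1 ≤ kSD (n + 1) t p := by
  set A := kSD n t (fun j => p (j + 1))
  obtain ⟨hAn, hA⟩ := le_kSD_iff.1 (le_refl A)
  refine le_kSD_iff.2 ⟨by omega, fun k hk => ?_⟩
  rcases (mem_Icc.1 hk).2.lt_or_eq with hlt | rfl
  · exact (hA k (mem_Icc.2 ⟨(mem_Icc.1 hk).1, by omega⟩)).trans
      (countLE_tail_le_countLE_succ _ _ _ _)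
  · rw [countLE_succ_of_le h]
    have hAA : A ≤ countLE n t (fun j => p (j + 1)) A := by
      rcases A.eq_zero_or_pos with hA0 | hApos
      · omega
      · exact hA A (mem_Icc.2 ⟨hApos, le_rfl⟩)
    have := countLE_mono (m := n) (fun j => p (j + 1))
      (ht.apply_le_of_le_of_le (Nat.le_add_right A 1) (by omega))
    omega

theorem le_kSD_tail_add_one_of_le_kSD (h : p 1 ≤ t (kSD (n + 1) t p)) :
    p 1 ≤ t (kSD n t (fun j => p (j + 1)) + 1) := by
  set K := kSD (n + 1) t p
  set A := kSD n t (fun j => p (j + 1))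
  by_contra! hlt
  have hKA : K ≤ A + 1 := by
    by_contra! hAK
    obtain ⟨hKn, hK⟩ := le_kSD_iff.1 (le_refl K)
    have : A + 1 ≤ A := by
      refine le_kSD_iff.2 ⟨by omega, fun k hk => ?_⟩
      obtain ⟨hk1, hkA⟩ := mem_Icc.1 hk
      rw [← countLE_succ_of_lt ((ht.apply_le_of_le_of_le hkA (by omega)).trans_lt hlt)]
      exact hK k (mem_Icc.2 ⟨hk1, by omega⟩)
    omega
  have := ht.apply_le_of_le_of_le hKA (by have := kSD_le n t (fun j => p (j + 1)); omega)
  linarith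

end

theorem stepdown_invariance_general (m : ℕ) (hm : 1 ≤ m)
    (t p : ℕ → ℝ) (ht : MonotoneOn t (Set.Icc 0 m)) :
    ((p 1 ≤ t (kSD m t p)) ↔
      (p 1 ≤ t (kSD (m - 1) t (fun j => p (j + 1)) + 1)))
    ∧
    ((p 1 ≤ t (kSD m t p)) ↔
      kSD m t p = kSD (m - 1) (fun k => t (k + 1)) (fun j => p (j + 1)) + 1) := by
  obtain ⟨n, rfl⟩ : ∃ n, m = n + 1 := ⟨m - 1, by omega⟩
  rw [Nat.add_sub_cancel]
  refine ⟨⟨le_kSD_tail_add_one_of_le_kSD ht, fun h => h.trans ?_⟩,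
    kSD_eq_kSD_tail_shift_add_one ht, le_of_kSD_eq_kSD_tail_shift_add_one ht⟩
  exact ht.apply_le_of_le_of_le (kSD_tail_add_one_le_kSD ht h) (kSD_le _ _ _)

/-- Step-down invariance lemma: with `k̃` the rejection number of `SD(t)` on `p₁,...,pₘ`,
`k̃₍₁₎` that of the step-down procedure with threshold `(tⱼ)_{1≤j≤m-1}` on `p₂,...,pₘ`, and
`k̃'₍₁₎` that of the step-down procedure with threshold `(t_{j+1})_{1≤j≤m-1}` on `p₂,...,pₘ`:
`p₁ ≤ t k̃ ↔ p₁ ≤ t (k̃₍₁₎+1) ↔ k̃ = k̃'₍₁₎ + 1`. -/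
theorem stepdown_invariance (m : ℕ) (hm : 1 ≤ m)
    (t p : ℕ → ℝ) (ht0 : t 0 = 0) (ht : MonotoneOn t (Set.Icc 0 m)) :
    ((p 1 ≤ t (kSD m t p)) ↔
      (p 1 ≤ t (kSD (m - 1) t (fun j => p (j + 1)) + 1)))
    ∧
    ((p 1 ≤ t (kSD m t p)) ↔
      kSD m t p = kSD (m - 1) (fun k => t (k + 1)) (fun j => p (j + 1)) + 1) :=
  stepdown_invariance_general m hm t p ht
end

section
/- In the unconditional independent model with m ≥ 2 hypotheses, for a step-up procedure SU(t) with nondecreasing threshold t, the number of falsely rejected hypotheses |H₀(H) ∩ SU(t)|, conditionally on the total rejection number |SU(t)| = k (for k ≥ 1), follows a binomial distribution B(k, π₀F₀(tₖ)/G(tₖ)), where G(t) = π₀F₀(t) + (1−π₀)F₁(t) and F₀(t) = t. -/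
open MeasureTheory Finset
open scoped Classical

/-- Rejection number of the step-up procedure with threshold `t` (1-indexed, `t 0 = 0`
by convention) applied to the `p`-values `p : Fin m → ℝ`:
the largest `k ≤ m` such that at least `k` of the `p`-values are `≤ t k`. -/
noncomputable def kSUf (m : ℕ) (t : ℕ → ℝ) (p : Fin m → ℝ) : ℕ :=
  Nat.findGreatest (fun k => k ≤ (Finset.univ.filter (fun i : Fin m => p i ≤ t k)).card) m

/-- The set of hypotheses rejected by the step-up procedure. -/
noncomputable def rejSUf (m : ℕ) (t : ℕ → ℝ) (p : Fin m → ℝ) : Finset (Fin m) :=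
  Finset.univ.filter (fun i => p i ≤ t (kSUf m t p))

/-- Rejection number of the step-down procedure with threshold `t` applied to `p`:
the largest `k ≤ m` such that for all `k' ≤ k` at least `k'` of the `p`-values are `≤ t k'`. -/
noncomputable def kSDf (m : ℕ) (t : ℕ → ℝ) (p : Fin m → ℝ) : ℕ :=
  Nat.findGreatest
    (fun k => ∀ k' ∈ Finset.Icc 1 k,
      k' ≤ (Finset.univ.filter (fun i : Fin m => p i ≤ t k')).card) m

/-- The set of hypotheses rejected by the step-down procedure. -/
noncomputable def rejSDf (m : ℕ) (t : ℕ → ℝ) (p : Fin m → ℝ) : Finset (Fin m) :=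
  Finset.univ.filter (fun i => p i ≤ t (kSDf m t p))

/-- Per-coordinate law of `(Hᵢ, pᵢ)` in the unconditional independent model:
with probability `π₀` the null holds (`Hᵢ = false`) and `pᵢ` is uniform on `(0,1)`;
with probability `1 - π₀` the alternative holds (`Hᵢ = true`) and `pᵢ ∼ μ1`. -/
noncomputable def coordM (pi0 : ℝ) (μ1 : Measure ℝ) : Measure (Bool × ℝ) :=
  (ENNReal.ofReal pi0) • ((Measure.dirac false).prod unifM)
    + (ENNReal.ofReal (1 - pi0)) • ((Measure.dirac true).prod μ1)

/-- The unconditional independent model: `m` i.i.d. copies of `(Hᵢ, pᵢ)`. -/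
noncomputable def modelM (m : ℕ) (pi0 : ℝ) (μ1 : Measure ℝ) : Measure (Fin m → Bool × ℝ) :=
  Measure.pi fun _ => coordM pi0 μ1

/-- The `p`-value family of an outcome `ω`. -/
noncomputable def pvals (m : ℕ) (ω : Fin m → Bool × ℝ) : Fin m → ℝ := fun i => (ω i).2

/-- Number of true null hypotheses rejected by the step-up procedure. -/
noncomputable def V0SU (m : ℕ) (t : ℕ → ℝ) (ω : Fin m → Bool × ℝ) : ℕ :=
  ((rejSUf m t (pvals m ω)).filter (fun i => (ω i).1 = false)).card

/-- Number of true null hypotheses rejected by the step-down procedure. -/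
noncomputable def V0SD (m : ℕ) (t : ℕ → ℝ) (ω : Fin m → Bool × ℝ) : ℕ :=
  ((rejSDf m t (pvals m ω)).filter (fun i => (ω i).1 = false)).card

/-!
The event `|SU(t)| = k` is the disjoint union, over the `k`-subsets `S`, of the events
`SU(t) = S`. For a nondecreasing threshold, `SU(t) = S` says that the `p`-values indexed by `S`
are `≤ t_k` and that the coordinates outside `S` satisfy a condition on themselves alone (they
exceed `t_k` and, with the `k` rejections added, never reach `t_{k'}` for `k' > k`). The model
being a product measure, the probability of this event factors as `P(p ≤ t_k)^k = G(t_k)^k`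
times a factor depending only on the coordinates outside `S`; intersecting with `{V₀ = j}`
replaces `G(t_k)^k` by the binomial weight `C(k,j) (π₀ t_k)^j ((1 - π₀) F₁(t_k))^(k-j)`.
Summing over `S` gives the claim.
-/

lemma card_filter_subtype {α : Type*} [Fintype α] (q : α → Prop) [Fintype {i // q i}]
    (P : α → Prop) [DecidablePred P] : #{i : {i // q i} | P i} = #{i | q i ∧ P i} := by
  rw [← Fintype.card_subtype, ← Fintype.card_subtype]
  exact Fintype.card_congr (Equiv.subtypeSubtypeEquivSubtypeInter q P)

lemma card_filter_eq_card_filter_notMem_add {α : Type*} [Fintype α] [DecidableEq α]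
    {P : α → Prop} [DecidablePred P] {S : Finset α} (hS : ∀ i ∈ S, P i) :
    #{i | P i} = #{i | i ∉ S ∧ P i} + #S := by
  rw [← card_union_of_disjoint (disjoint_left.2 fun i hi h => (mem_filter.1 hi).2.1 h)]
  congr 1
  ext i
  by_cases h : i ∈ S <;> simp [h, hS]

lemma choose_mul_pow_mul_pow_eq {K : Type*} [Field K] [LinearOrder K] [IsStrictOrderedRing K]
    {a b : K} (ha : 0 ≤ a) (hb : 0 ≤ b) (k j : ℕ) :
    (k.choose j : K) * a ^ j * b ^ (k - j)
      = k.choose j * (a / (a + b)) ^ j * (b / (a + b)) ^ (k - j) * (a + b) ^ k := by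
  rcases lt_or_ge k j with hkj | hjk
  · simp [Nat.choose_eq_zero_of_lt hkj]
  have hab := add_eq_zero_iff_of_nonneg ha hb
  calc (k.choose j : K) * a ^ j * b ^ (k - j)
      = k.choose j * (a / (a + b) * (a + b)) ^ j * (b / (a + b) * (a + b)) ^ (k - j) := by
        rw [div_mul_cancel_of_imp fun h => (hab.1 h).1,
          div_mul_cancel_of_imp fun h => (hab.1 h).2]
    _ = k.choose j * (a / (a + b)) ^ j * (b / (a + b)) ^ (k - j)
          * ((a + b) ^ j * (a + b) ^ (k - j)) := by rw [mul_pow, mul_pow]; ring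
    _ = _ := by rw [← pow_add, Nat.add_sub_cancel' hjk]

lemma MonotoneOn.Iic_of_Icc_one {β : Type*} [Preorder β] {m : ℕ} {t : ℕ → β}
    (ht : MonotoneOn t (Set.Icc 1 m)) (h0 : ∀ j ∈ Set.Icc 1 m, t 0 ≤ t j) :
    MonotoneOn t (Set.Iic m) := by
  intro a ha b hb hab
  rcases Nat.eq_zero_or_pos a with rfl | ha1
  · rcases Nat.eq_zero_or_pos b with rfl | hb1
    · rfl
    · exact h0 b ⟨hb1, hb⟩
  · exact ht ⟨ha1, ha⟩ ⟨ha1.trans_le hab, hb⟩ hab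

section StepUp

variable {m : ℕ} {t : ℕ → ℝ} (p : Fin m → ℝ)

lemma card_rejSUf (ht : MonotoneOn t (Set.Iic m)) : #(rejSUf m t p) = kSUf m t p := by
  set K := kSUf m t p
  have hK : K ≤ #{i | p i ≤ t K} :=
    Nat.findGreatest_spec (P := fun n => n ≤ #{i | p i ≤ t n}) (Nat.zero_le m) (Nat.zero_le _)
  -- if more than `K` p-values were `≤ t K`, then `K + 1` would qualify too (monotone counts)
  refine le_antisymm (not_lt.1 fun hlt => ?_) hK
  have hK1 : K + 1 ≤ m := hlt.trans_le ((card_le_univ _).trans_eq (Fintype.card_fin m))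
  refine Nat.findGreatest_is_greatest (P := fun n => n ≤ #{i | p i ≤ t n})
    (Nat.lt_succ_self K) hK1 (hlt.trans_le ?_)
  exact card_le_card <| monotone_filter_right _ fun i _ hi =>
    hi.trans (ht (Set.mem_Iic.2 (by omega)) (Set.mem_Iic.2 hK1) (Nat.le_succ K))

lemma kSUf_eq_iff (ht : MonotoneOn t (Set.Iic m)) {k : ℕ} :
    kSUf m t p = k ↔
      #{i | p i ≤ t k} = k ∧ ∀ k', k < k' → k' ≤ m → #{i | p i ≤ t k'} < k' := by
  constructor
  · rintro rfl
    exact ⟨card_rejSUf p ht,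
      fun k' h1 h2 => not_le.1 (Nat.findGreatest_is_greatest
        (P := fun n => n ≤ #{i | p i ≤ t n}) h1 h2)⟩
  · rintro ⟨hk, htail⟩
    have hkm : k ≤ m := hk ▸ (card_le_univ _).trans_eq (Fintype.card_fin m)
    exact Nat.findGreatest_eq_iff.2
      ⟨hkm, fun _ => hk.ge, fun n h1 h2 => not_le.2 (htail n h1 h2)⟩

lemma rejSUf_eq_iff (ht : MonotoneOn t (Set.Iic m)) (S : Finset (Fin m)) :
    rejSUf m t p = S ↔ (∀ i ∈ S, p i ≤ t #S) ∧ (∀ i ∉ S, t #S < p i) ∧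
      ∀ k', #S < k' → k' ≤ m → #{i | i ∉ S ∧ p i ≤ t k'} + #S < k' := by
  have hsplit : (∀ i ∈ S, p i ≤ t #S) → ∀ k', #S < k' → k' ≤ m →
      #{i | p i ≤ t k'} = #{i | i ∉ S ∧ p i ≤ t k'} + #S := fun hin k' h1 h2 =>
    card_filter_eq_card_filter_notMem_add fun i hi => (hin i hi).trans <|
      ht (Set.mem_Iic.2 (h1.le.trans h2)) (Set.mem_Iic.2 h2) h1.le
  constructor
  · intro h
    have hK : kSUf m t p = #S := by rw [← h, card_rejSUf p ht]
    have hfilt : ({i | p i ≤ t #S} : Finset (Fin m)) = S := by rw [← hK]; exact h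
    have hmem : ∀ i, p i ≤ t #S ↔ i ∈ S := fun i => by simpa using Finset.ext_iff.1 hfilt i
    have hin : ∀ i ∈ S, p i ≤ t #S := fun i hi => (hmem i).2 hi
    refine ⟨hin, fun i hi => not_le.1 fun h' => hi ((hmem i).1 h'), fun k' h1 h2 => ?_⟩
    rw [← hsplit hin k' h1 h2]
    exact ((kSUf_eq_iff p ht).1 hK).2 k' h1 h2
  · rintro ⟨hin, hout, htail⟩
    have hfilt : ({i | p i ≤ t #S} : Finset (Fin m)) = S := by
      ext i
      by_cases hi : i ∈ S
      · simp [hi, hin i hi]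
      · simp [hi, hout i hi]
    have hK : kSUf m t p = #S := (kSUf_eq_iff p ht).2
      ⟨by rw [hfilt], fun k' h1 h2 => hsplit hin k' h1 h2 ▸ htail k' h1 h2⟩
    rw [rejSUf, hK, hfilt]

end StepUp

@[fun_prop]
lemma measurable_card_filter {Ω ι : Type*} [MeasurableSpace Ω] (s : Finset ι) {P : ι → Ω → Prop}
    [∀ i ω, Decidable (P i ω)] (h : ∀ i, Measurable (P i)) :
    Measurable fun ω => #{i ∈ s | P i ω} := by
  simp only [card_filter]
  exact Finset.measurable_sum s fun i _ =>
    Measurable.ite (measurableSet_setOfPred.2 (h i)) measurable_const measurable_const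

lemma measure_setOf_card_eq_inter {Ω ι : Type*} [MeasurableSpace Ω] [Fintype ι]
    (μ : Measure Ω) (f : Ω → Finset ι) (E : Set Ω) (k : ℕ)
    (h : ∀ S, MeasurableSet ({ω | f ω = S} ∩ E)) :
    μ ({ω | #(f ω) = k} ∩ E) = ∑ S ∈ powersetCard k univ, μ ({ω | f ω = S} ∩ E) := by
  have hunion : {ω | #(f ω) = k} ∩ E = ⋃ S ∈ powersetCard k univ, {ω | f ω = S} ∩ E := by
    ext ω
    simp
  rw [hunion, measure_biUnion_finset _ fun S _ => h S]
  exact fun S _ S' _ hne => Set.disjoint_left.2 fun ω h1 h2 => hne (h1.1.symm.trans h2.1)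

lemma mem_univ_pi_ite_inter_diff {ι α : Type*} {x : ι → α} {T : Finset ι} {C A : Set α} :
    x ∈ Set.univ.pi (fun i => if i ∈ T then C ∩ A else C \ A) ↔
      ∀ i, x i ∈ C ∧ (i ∈ T ↔ x i ∈ A) := by
  refine Set.mem_univ_pi.trans (forall_congr' fun i => ?_)
  by_cases hi : i ∈ T <;> simp [hi]

lemma setOf_forall_mem_card_eq {ι α : Type*} [Fintype ι] (C A : Set α) [DecidablePred (· ∈ A)]
    (j : ℕ) :
    {x : ι → α | (∀ i, x i ∈ C) ∧ #{i | x i ∈ A} = j}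
      = ⋃ T ∈ powersetCard j univ, Set.univ.pi fun i => if i ∈ T then C ∩ A else C \ A := by
  ext x
  simp only [Set.mem_ofPred_eq, Set.mem_iUnion, mem_univ_pi_ite_inter_diff, mem_powersetCard_univ,
    exists_prop]
  constructor
  · rintro ⟨hC, rfl⟩
    exact ⟨_, rfl, fun i => ⟨hC i, by simp⟩⟩
  · rintro ⟨T, rfl, hx⟩
    exact ⟨fun i => (hx i).1, congrArg card (by ext i; simp [(hx i).2])⟩

lemma pi_preimage_piEquivPiSubtypeProd {ι : Type*} [Fintype ι] {α : ι → Type*}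
    [∀ i, MeasurableSpace (α i)] (μ : ∀ i, Measure (α i)) [∀ i, SigmaFinite (μ i)]
    (p : ι → Prop) [DecidablePred p]
    (A : Set (∀ i : Subtype p, α i)) (B : Set (∀ i : {i // ¬ p i}, α i)) :
    Measure.pi μ (MeasurableEquiv.piEquivPiSubtypeProd α p ⁻¹' A ×ˢ B)
      = Measure.pi (fun i : Subtype p => μ i) A * Measure.pi (fun i : {i // ¬ p i} => μ i) B := by
  rw [(measurePreserving_piEquivPiSubtypeProd μ p).measure_preimage_equiv, Measure.prod_prod]

section Pi

variable {ι α : Type*} [Fintype ι] [MeasurableSpace α] (ν : Measure α) [SigmaFinite ν]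

lemma pi_setOf_forall_mem (C : Set α) :
    Measure.pi (fun _ : ι => ν) {x | ∀ i, x i ∈ C} = ν C ^ Fintype.card ι := by
  have hbox : {x : ι → α | ∀ i, x i ∈ C} = Set.univ.pi fun _ => C := by ext; simp
  rw [hbox, Measure.pi_pi, prod_const, card_univ]

lemma pi_setOf_forall_mem_card_eq {C A : Set α} [DecidablePred (· ∈ A)] (hC : MeasurableSet C)
    (hA : MeasurableSet A) (j : ℕ) :
    Measure.pi (fun _ : ι => ν) {x | (∀ i, x i ∈ C) ∧ #{i | x i ∈ A} = j}
      = (Fintype.card ι).choose j * ν (C ∩ A) ^ j * ν (C \ A) ^ (Fintype.card ι - j) := by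
  rw [setOf_forall_mem_card_eq, measure_biUnion_finset]
  · have hbox : ∀ T ∈ powersetCard j (univ : Finset ι),
        Measure.pi (fun _ => ν) (Set.univ.pi fun i => if i ∈ T then C ∩ A else C \ A)
          = ν (C ∩ A) ^ j * ν (C \ A) ^ (Fintype.card ι - j) := by
      intro T hT
      rw [mem_powersetCard_univ] at hT
      simp [Measure.pi_pi, apply_ite ν, prod_ite, filter_notMem_eq_sdiff, card_univ_sdiff, hT]
    rw [sum_congr rfl hbox, sum_const, card_powersetCard, card_univ, nsmul_eq_mul, mul_assoc]
  · intro T _ T' _ hne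
    refine Set.disjoint_left.2 fun x hx hx' => hne ?_
    ext i
    rw [(mem_univ_pi_ite_inter_diff.1 hx i).2, (mem_univ_pi_ite_inter_diff.1 hx' i).2]
  · exact fun T _ => MeasurableSet.univ_pi fun i => by
      split_ifs
      exacts [hC.inter hA, hC.diff hA]

end Pi

instance inst_s7 : IsProbabilityMeasure unifM :=
  ⟨by simp [unifM, Measure.restrict_apply MeasurableSet.univ, Real.volume_Ioo]⟩

lemma unifM_Iic {s : ℝ} (hs : s ≤ 1) : unifM (Set.Iic s) = ENNReal.ofReal s := by
  rw [unifM, Measure.restrict_congr_set Ioo_ae_eq_Ioc, Measure.restrict_apply measurableSet_Iic,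
    Set.Iic_inter_Ioc_of_le hs, Real.volume_Ioc, sub_zero]

section CoordM

variable {pi0 : ℝ} {μ1 : Measure ℝ}

lemma isProbabilityMeasure_coordM [IsProbabilityMeasure μ1] (hpi0 : pi0 ∈ Set.Icc (0 : ℝ) 1) :
    IsProbabilityMeasure (coordM pi0 μ1) := by
  constructor
  simp [coordM, ← ENNReal.ofReal_add hpi0.1 (sub_nonneg.2 hpi0.2)]

lemma coordM_le_inter_null_toReal [SFinite μ1] (hpi0 : pi0 ∈ Set.Icc (0 : ℝ) 1) {s : ℝ}
    (hs : s ∈ Set.Icc (0 : ℝ) 1) :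
    (coordM pi0 μ1 ({z | z.2 ≤ s} ∩ {z | z.1 = false})).toReal = pi0 * s := by
  have hset : {z : Bool × ℝ | z.2 ≤ s} ∩ {z | z.1 = false} = {false} ×ˢ Set.Iic s := by
    ext ⟨b, x⟩
    simp [and_comm]
  simp [hset, coordM, Measure.prod_prod, unifM_Iic hs.2, hpi0.1, hs.1]

lemma coordM_le_diff_null_toReal [SFinite μ1] (hpi0 : pi0 ∈ Set.Icc (0 : ℝ) 1) (s : ℝ) :
    (coordM pi0 μ1 ({z | z.2 ≤ s} \ {z | z.1 = false})).toReal
      = (1 - pi0) * (μ1 (Set.Iic s)).toReal := by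
  have hset : {z : Bool × ℝ | z.2 ≤ s} \ {z | z.1 = false} = {true} ×ˢ Set.Iic s := by
    ext ⟨b, x⟩
    cases b <;> simp
  simp [hset, coordM, Measure.prod_prod, hpi0.2]

lemma coordM_le_toReal [IsProbabilityMeasure μ1] (hpi0 : pi0 ∈ Set.Icc (0 : ℝ) 1) {s : ℝ}
    (hs : s ∈ Set.Icc (0 : ℝ) 1) :
    (coordM pi0 μ1 {z | z.2 ≤ s}).toReal = pi0 * s + (1 - pi0) * (μ1 (Set.Iic s)).toReal := by
  have := isProbabilityMeasure_coordM (μ1 := μ1) hpi0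
  rw [← measure_inter_add_sdiff _ (measurableSet_eq_fun measurable_fst measurable_const),
    ENNReal.toReal_add (measure_ne_top _ _) (measure_ne_top _ _),
    coordM_le_inter_null_toReal hpi0 hs, coordM_le_diff_null_toReal hpi0]

end CoordM

section IidStepUp

variable {m : ℕ} {t : ℕ → ℝ}

def stepUpTail (t : ℕ → ℝ) (S : Finset (Fin m)) : Set ({i // i ∉ S} → Bool × ℝ) :=
  {y | (∀ i, t #S < (y i).2) ∧ ∀ k', #S < k' → k' ≤ m → #{i | (y i).2 ≤ t k'} + #S < k'}

lemma measurableSet_stepUpTail (S : Finset (Fin m)) : MeasurableSet (stepUpTail t S) := by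
  unfold stepUpTail
  measurability

lemma setOf_rejSUf_eq_inter (ht : MonotoneOn t (Set.Iic m)) (S : Finset (Fin m))
    (A : Set ({i // i ∈ S} → Bool × ℝ)) :
    {ω | rejSUf m t (pvals m ω) = S} ∩ (fun ω (i : {i // i ∈ S}) => ω i) ⁻¹' A
      = MeasurableEquiv.piEquivPiSubtypeProd (fun _ => Bool × ℝ) (· ∈ S) ⁻¹'
          (({x | ∀ i, (x i).2 ≤ t #S} ∩ A) ×ˢ stepUpTail t S) := by
  ext ω
  have hcount : ∀ k', #{i : {i // i ∉ S} | (ω i).2 ≤ t k'} = #{i | i ∉ S ∧ (ω i).2 ≤ t k'} :=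
    fun k' => by convert card_filter_subtype (· ∉ S) (fun i => (ω i).2 ≤ t k')
  have he : MeasurableEquiv.piEquivPiSubtypeProd (fun _ => Bool × ℝ) (· ∈ S) ω
      = (fun i : {i // i ∈ S} => ω i, fun i : {i // i ∉ S} => ω i) := rfl
  simp only [Set.mem_inter_iff, Set.mem_ofPred_eq, Set.mem_preimage, Set.mem_prod, he,
    rejSUf_eq_iff _ ht, stepUpTail, pvals, hcount, Subtype.forall]
  tauto

lemma measurableSet_setOf_rejSUf_eq_inter (ht : MonotoneOn t (Set.Iic m)) (S : Finset (Fin m))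
    {A : Set ({i // i ∈ S} → Bool × ℝ)} (hA : MeasurableSet A) :
    MeasurableSet
      ({ω | rejSUf m t (pvals m ω) = S} ∩ (fun ω (i : {i // i ∈ S}) => ω i) ⁻¹' A) := by
  rw [setOf_rejSUf_eq_inter ht]
  exact MeasurableEquiv.measurable _ <|
    (MeasurableSet.inter (by measurability) hA).prod (measurableSet_stepUpTail S)

variable (ν : Measure (Bool × ℝ)) [SigmaFinite ν]

lemma pi_setOf_rejSUf_eq_inter (ht : MonotoneOn t (Set.Iic m)) (S : Finset (Fin m))
    (A : Set ({i // i ∈ S} → Bool × ℝ)) :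
    Measure.pi (fun _ => ν)
        ({ω | rejSUf m t (pvals m ω) = S} ∩ (fun ω (i : {i // i ∈ S}) => ω i) ⁻¹' A)
      = Measure.pi (fun _ => ν) ({x | ∀ i, (x i).2 ≤ t #S} ∩ A)
          * Measure.pi (fun _ => ν) (stepUpTail t S) := by
  rw [setOf_rejSUf_eq_inter ht, pi_preimage_piEquivPiSubtypeProd]
  -- `Subtype.fintype` against `Finset.Subtype.fintype` on `{i // i ∈ S}`
  congr
  exact Subsingleton.elim _ _

lemma pi_setOf_card_rejSUf_eq (ht : MonotoneOn t (Set.Iic m)) (k : ℕ) :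
    Measure.pi (fun _ => ν) {ω | #(rejSUf m t (pvals m ω)) = k}
      = ν {z | z.2 ≤ t k} ^ k
          * ∑ S ∈ powersetCard k (univ : Finset (Fin m)),
              Measure.pi (fun _ => ν) (stepUpTail t S) := by
  have hsum := measure_setOf_card_eq_inter (Measure.pi fun _ => ν)
    (fun ω => rejSUf m t (pvals m ω)) Set.univ k fun S => by
      simpa using measurableSet_setOf_rejSUf_eq_inter ht S MeasurableSet.univ
  simp only [Set.inter_univ] at hsum
  rw [hsum, mul_sum]
  refine sum_congr rfl fun S hS => ?_
  obtain rfl := mem_powersetCard_univ.1 hS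
  have hS := pi_setOf_rejSUf_eq_inter ν ht S Set.univ
  simp only [Set.preimage_univ, Set.inter_univ] at hS
  rw [hS]
  congr 1
  simpa using pi_setOf_forall_mem (ι := {i // i ∈ S}) ν {z : Bool × ℝ | z.2 ≤ t #S}

lemma pi_setOf_V0SU_eq_and_card_rejSUf_eq (ht : MonotoneOn t (Set.Iic m)) (k j : ℕ) :
    Measure.pi (fun _ => ν) {ω | V0SU m t ω = j ∧ #(rejSUf m t (pvals m ω)) = k}
      = k.choose j * ν ({z | z.2 ≤ t k} ∩ {z | z.1 = false}) ^ j
          * ν ({z | z.2 ≤ t k} \ {z | z.1 = false}) ^ (k - j)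
          * ∑ S ∈ powersetCard k (univ : Finset (Fin m)),
              Measure.pi (fun _ => ν) (stepUpTail t S) := by
  have hset : ∀ S, {ω | rejSUf m t (pvals m ω) = S} ∩ {ω | V0SU m t ω = j}
      = {ω | rejSUf m t (pvals m ω) = S} ∩ (fun ω (i : {i // i ∈ S}) => ω i) ⁻¹'
          {x | #{i | (x i).1 = false} = j} := by
    intro S
    ext ω
    simp only [Set.mem_inter_iff, Set.mem_ofPred_eq, Set.mem_preimage, and_congr_right_iff]
    intro h
    rw [V0SU, h, card_filter, card_filter, ← sum_attach, univ_eq_attach]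
  have hsum := measure_setOf_card_eq_inter (Measure.pi fun _ => ν)
    (fun ω => rejSUf m t (pvals m ω)) {ω | V0SU m t ω = j} k fun S => by
      rw [hset]
      exact measurableSet_setOf_rejSUf_eq_inter ht S (by measurability)
  rw [Set.ofPred_and, Set.inter_comm, hsum, mul_sum]
  refine sum_congr rfl fun S hS => ?_
  obtain rfl := mem_powersetCard_univ.1 hS
  rw [hset, pi_setOf_rejSUf_eq_inter ν ht S, ← Set.ofPred_and]
  have hbinom := pi_setOf_forall_mem_card_eq (ι := {i // i ∈ S}) ν
    (C := {z | z.2 ≤ t #S}) (A := {z | z.1 = false})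
    (measurableSet_le measurable_snd measurable_const)
    (measurableSet_eq_fun measurable_fst measurable_const) j
  simp only [Set.mem_ofPred_eq, Fintype.card_coe] at hbinom
  rw [hbinom]

end IidStepUp

theorem stepup_conditional_binomial_general (m : ℕ)
    (pi0 : ℝ) (hpi0 : pi0 ∈ Set.Icc (0:ℝ) 1)
    (μ1 : Measure ℝ) [IsProbabilityMeasure μ1]
    (F1 : ℝ → ℝ) (hF1 : ∀ s, F1 s = (μ1 (Set.Iic s)).toReal)
    (t : ℕ → ℝ) (ht0 : t 0 = 0) (ht : MonotoneOn t (Set.Icc 1 m))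
    (ht01 : ∀ j ∈ Set.Icc 1 m, t j ∈ Set.Icc (0:ℝ) 1)
    (G : ℝ → ℝ) (hG : ∀ s, G s = pi0 * s + (1 - pi0) * F1 s)
    (k : ℕ) (hkm : k ≤ m)
    (j : ℕ) :
    (modelM m pi0 μ1
        {ω | V0SU m t ω = j ∧ (rejSUf m t (pvals m ω)).card = k}).toReal
      = (k.choose j : ℝ) * (pi0 * t k / G (t k)) ^ j
          * ((1 - pi0) * F1 (t k) / G (t k)) ^ (k - j)
          * (modelM m pi0 μ1 {ω | (rejSUf m t (pvals m ω)).card = k}).toReal := by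
  have hmono : MonotoneOn t (Set.Iic m) := ht.Iic_of_Icc_one fun j hj => ht0 ▸ (ht01 j hj).1
  have htk : t k ∈ Set.Icc (0 : ℝ) 1 := by
    rcases Nat.eq_zero_or_pos k with rfl | hk
    · simp [ht0]
    · exact ht01 k ⟨hk, hkm⟩
  have := isProbabilityMeasure_coordM (μ1 := μ1) hpi0
  rw [modelM, pi_setOf_V0SU_eq_and_card_rejSUf_eq _ hmono, pi_setOf_card_rejSUf_eq _ hmono]
  simp only [ENNReal.toReal_mul, ENNReal.toReal_pow, ENNReal.toReal_natCast,
    coordM_le_inter_null_toReal hpi0 htk, coordM_le_diff_null_toReal hpi0,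
    coordM_le_toReal hpi0 htk, hG, hF1]
  rw [choose_mul_pow_mul_pow_eq (mul_nonneg hpi0.1 htk.1)
    (mul_nonneg (sub_nonneg.2 hpi0.2) ENNReal.toReal_nonneg)]
  ring

/-- In the unconditional independent model, conditionally on `|SU(t)| = k` (`k ≥ 1`),
the number of erroneous rejections `|H₀(H) ∩ SU(t)|` is binomial
`B(k, π₀ F₀(t_k) / G(t_k))` with `F₀(t) = t` and `G = π₀ F₀ + (1-π₀) F₁`:
equivalently, for every `j ≤ k`,
`P(V₀ = j ∧ |SU| = k) = C(k,j) (π₀ t_k/G(t_k))^j ((1-π₀)F₁(t_k)/G(t_k))^{k-j} · P(|SU| = k)`. -/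
theorem stepup_conditional_binomial (m : ℕ) (hm : 2 ≤ m)
    (pi0 : ℝ) (hpi0 : pi0 ∈ Set.Icc (0:ℝ) 1)
    (μ1 : Measure ℝ) [IsProbabilityMeasure μ1] (hsupp : μ1 (Set.Icc 0 1) = 1)
    (F1 : ℝ → ℝ) (hF1 : ∀ s, F1 s = (μ1 (Set.Iic s)).toReal) (hF1c : Continuous F1)
    (t : ℕ → ℝ) (ht0 : t 0 = 0) (ht : MonotoneOn t (Set.Icc 1 m))
    (ht01 : ∀ j ∈ Set.Icc 1 m, t j ∈ Set.Icc (0:ℝ) 1)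
    (G : ℝ → ℝ) (hG : ∀ s, G s = pi0 * s + (1 - pi0) * F1 s)
    (k : ℕ) (hk : 1 ≤ k) (hkm : k ≤ m) (hGpos : 0 < G (t k))
    (j : ℕ) (hj : j ≤ k) :
    (modelM m pi0 μ1
        {ω | V0SU m t ω = j ∧ (rejSUf m t (pvals m ω)).card = k}).toReal
      = (k.choose j : ℝ) * (pi0 * t k / G (t k)) ^ j
          * ((1 - pi0) * F1 (t k) / G (t k)) ^ (k - j)
          * (modelM m pi0 μ1 {ω | (rejSUf m t (pvals m ω)).card = k}).toReal :=
  stepup_conditional_binomial_general m pi0 hpi0 μ1 F1 hF1 t ht0 ht ht01 G hG k hkm j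
end

section
/- Concavity inequality for mixture c.d.f.'s: let F₁ : [0,1] → [0,1] be a concave c.d.f. with F₁(1) = 1, let π₀ ∈ [0,1], π₁ = 1−π₀, and set G(t) = π₀t + π₁F₁(t) and G₁(t) = π₀t + π₁. Then for all 0 ≤ t ≤ t' ≤ 1 with G(t) < 1 and G₁(t) < 1: (G(t')−G(t))/(1−G(t)) ≥ (G₁(t')−G₁(t))/(1−G₁(t)). -/
/-! Concavity of `F₁` with `F₁(1) = 1` gives `(t' - t)(1 - F₁ t) ≤ (F₁ t' - F₁ t)(1 - t)`, i.e. the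
increment ratio of `F₁` dominates that of the identity. The increment ratio of `G` is the mediant
of those of `π₀ · id` (which is the ratio of `G₁`) and `π₁ · F₁`, so it dominates the ratio of `G₁`. -/

theorem ConcaveOn.sub_mul_add_sub_mul_le {𝕜 : Type*} [Field 𝕜] [LinearOrder 𝕜]
    [IsStrictOrderedRing 𝕜] {s : Set 𝕜} {f : 𝕜 → 𝕜} (hf : ConcaveOn 𝕜 s f) {x y z : 𝕜}
    (hx : x ∈ s) (hz : z ∈ s) (hxy : x ≤ y) (hyz : y ≤ z) :
    (z - y) * f x + (y - x) * f z ≤ (z - x) * f y := by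
  rcases hxy.eq_or_lt with rfl | hxy
  · exact le_of_eq (by ring)
  rcases hyz.eq_or_lt with rfl | hyz
  · exact le_of_eq (by ring)
  have := hf.neg.secant_mono_aux1 hx hz hxy hyz
  simp only [Pi.neg_apply] at this
  linarith

theorem div_le_add_div_add {α : Type*} [Field α] [LinearOrder α] [IsStrictOrderedRing α]
    {a b c d : α} (hb : 0 < b) (hbd : 0 < b + d) (h : a * d ≤ c * b) :
    a / b ≤ (a + c) / (b + d) := by
  rw [div_le_div_iff₀ hb hbd]
  linarith

theorem mixture_concave_ineq_general (F1 : ℝ → ℝ)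
    (hconc : ConcaveOn ℝ (Set.Icc 0 1) F1)
    (hF11 : F1 1 = 1)
    (pi0 : ℝ) (hpi0 : pi0 ∈ Set.Icc (0:ℝ) 1)
    (G G1 : ℝ → ℝ)
    (hG : ∀ s, G s = pi0 * s + (1 - pi0) * F1 s)
    (hG1 : ∀ s, G1 s = pi0 * s + (1 - pi0))
    (t t' : ℝ) (h0t : 0 ≤ t) (htt' : t ≤ t') (ht'1 : t' ≤ 1)
    (hGt : G t < 1) (hG1t : G1 t < 1) :
    (G1 t' - G1 t) / (1 - G1 t) ≤ (G t' - G t) / (1 - G t) := by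
  obtain ⟨hpi0, hpi1⟩ := hpi0
  have hchord := hconc.sub_mul_add_sub_mul_le ⟨h0t, htt'.trans ht'1⟩ ⟨zero_le_one, le_rfl⟩
    htt' ht'1
  rw [hF11] at hchord
  have hcross : pi0 * (t' - t) * ((1 - pi0) * (1 - F1 t)) ≤
      (1 - pi0) * (F1 t' - F1 t) * (pi0 * (1 - t)) := by
    linarith [mul_le_mul_of_nonneg_left hchord (mul_nonneg hpi0 (sub_nonneg.2 hpi1))]
  have hG1_den : 1 - G1 t = pi0 * (1 - t) := by rw [hG1]; ring
  have hG_den : 1 - G t = pi0 * (1 - t) + (1 - pi0) * (1 - F1 t) := by rw [hG]; ring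
  have hG1_num : G1 t' - G1 t = pi0 * (t' - t) := by rw [hG1, hG1]; ring
  have hG_num : G t' - G t = pi0 * (t' - t) + (1 - pi0) * (F1 t' - F1 t) := by
    rw [hG, hG]; ring
  rw [hG1_den, hG_den, hG1_num, hG_num]
  exact div_le_add_div_add (hG1_den ▸ sub_pos.2 hG1t) (hG_den ▸ sub_pos.2 hGt) hcross

/-- Concavity inequality for mixture c.d.f.'s: if `F₁ : [0,1] → [0,1]` is a concave
nondecreasing c.d.f. with `F₁(1) = 1`, `G = π₀·id + π₁·F₁` and `G₁ = π₀·id + π₁`, then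
for `0 ≤ t ≤ t' ≤ 1` with `G(t) < 1` and `G₁(t) < 1`,
`(G(t')-G(t))/(1-G(t)) ≥ (G₁(t')-G₁(t))/(1-G₁(t))`. -/
theorem mixture_concave_ineq (F1 : ℝ → ℝ)
    (hconc : ConcaveOn ℝ (Set.Icc 0 1) F1)
    (hmono : MonotoneOn F1 (Set.Icc 0 1))
    (hrange : ∀ s ∈ Set.Icc (0:ℝ) 1, F1 s ∈ Set.Icc (0:ℝ) 1)
    (hF11 : F1 1 = 1)
    (pi0 : ℝ) (hpi0 : pi0 ∈ Set.Icc (0:ℝ) 1)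
    (G G1 : ℝ → ℝ)
    (hG : ∀ s, G s = pi0 * s + (1 - pi0) * F1 s)
    (hG1 : ∀ s, G1 s = pi0 * s + (1 - pi0))
    (t t' : ℝ) (h0t : 0 ≤ t) (htt' : t ≤ t') (ht'1 : t' ≤ 1)
    (hGt : G t < 1) (hG1t : G1 t < 1) :
    (G1 t' - G1 t) / (1 - G1 t) ≤ (G t' - G t) / (1 - G t) :=
  mixture_concave_ineq_general F1 hconc hF11 pi0 hpi0 G G1 hG hG1 t t' h0t htt' ht'1 hGt hG1t
end
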